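/- arXiv:2505.05430 — 8 statements merged into one kernel-verified Lean document; each statement's English description precedes it below -/
import Mathlib

section
/- The function φ is smooth on ℝ², is 2π-periodic in x, satisfies Laplace's equation ∂²φ/∂x² + ∂²φ/∂y² = 0 at every point of ℝ², satisfies the Dirichlet condition φ(x,0) = Σ_{j∈ℤ} ψ̂(j)·e^{ijx} for all x ∈ ℝ, and satisfies the Neumann condition −∂φ/∂y(x,−h) = Σ_{j∈ℤ} θ̂(j)·e^{ijx} for all x ∈ ℝ. (This verifies the explicit solution of the flat-configuration boundary value problem Δφ = 0 in 𝕋×(−h,0), φ = ψ at y = 0, −φ_y = θ at y = −h.) -/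
open Complex

/-- The explicit solution of the flat-configuration boundary value problem
`Δφ = 0` in `𝕋 × (−h,0)`, `φ = ψ` at `y = 0`, `−φ_y = θ` at `y = −h`,
written through the (finitely supported) Fourier coefficients `ψ̂ = ψ`, `θ̂ = θ`. -/
noncomputable def phiFlat (h : ℝ) (ψ θ : ℤ → ℂ) (x y : ℝ) : ℂ :=
  ψ 0 - θ 0 * (y : ℂ) +
    ∑ᶠ (j : ℤ) (_ : j ≠ 0),
      ((Complex.cosh ((j : ℂ) * ((y : ℂ) + (h : ℂ))) / Complex.cosh ((j : ℂ) * (h : ℂ))) * ψ j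
        - (Complex.sinh ((j : ℂ) * (y : ℂ)) / ((j : ℂ) * Complex.cosh ((j : ℂ) * (h : ℂ)))) * θ j)
        * Complex.exp (Complex.I * (j : ℂ) * (x : ℂ))

noncomputable def flatCoef (h : ℝ) (ψ θ : ℤ → ℂ) (j : ℤ) (y : ℝ) : ℂ :=
  Complex.cosh ((j : ℂ) * ((y : ℂ) + (h : ℂ))) / Complex.cosh ((j : ℂ) * (h : ℂ)) * ψ j
    - Complex.sinh ((j : ℂ) * (y : ℂ)) / ((j : ℂ) * Complex.cosh ((j : ℂ) * (h : ℂ))) * θ j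

noncomputable def flatCoefD (h : ℝ) (ψ θ : ℤ → ℂ) (j : ℤ) (y : ℝ) : ℂ :=
  Complex.sinh ((j : ℂ) * ((y : ℂ) + (h : ℂ))) / Complex.cosh ((j : ℂ) * (h : ℂ)) * ψ j
    - Complex.cosh ((j : ℂ) * (y : ℂ)) / ((j : ℂ) * Complex.cosh ((j : ℂ) * (h : ℂ))) * θ j

lemma hasDerivAt_aux1 (j : ℤ) (h : ℝ) (y : ℝ) :
    HasDerivAt (fun z : ℂ => (j : ℂ) * (z + (h : ℂ))) (j : ℂ) (y : ℂ) := by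
  simpa using ((hasDerivAt_id ((y : ℝ) : ℂ)).add_const (h : ℂ)).const_mul (j : ℂ)

lemma hasDerivAt_aux2 (j : ℤ) (y : ℝ) :
    HasDerivAt (fun z : ℂ => (j : ℂ) * z) (j : ℂ) (y : ℂ) := by
  simpa using (hasDerivAt_id ((y : ℝ) : ℂ)).const_mul (j : ℂ)

lemma hasDerivAt_flatCoef (h : ℝ) (ψ θ : ℤ → ℂ) (j : ℤ) (y : ℝ) :
    HasDerivAt (fun t : ℝ => flatCoef h ψ θ j t) ((j : ℂ) * flatCoefD h ψ θ j y) y := by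
  have H := ((((hasDerivAt_aux1 j h y).ccosh).div_const
      (Complex.cosh ((j : ℂ) * (h : ℂ)))).mul_const (ψ j)).sub
    ((((hasDerivAt_aux2 j y).csinh).div_const
      ((j : ℂ) * Complex.cosh ((j : ℂ) * (h : ℂ)))).mul_const (θ j))
  have H2 := H.comp_ofReal
  convert H2 using 1
  · funext t; rfl
  · unfold flatCoefD; ring

lemma hasDerivAt_flatCoefD (h : ℝ) (ψ θ : ℤ → ℂ) (j : ℤ) (y : ℝ) :
    HasDerivAt (fun t : ℝ => flatCoefD h ψ θ j t) ((j : ℂ) * flatCoef h ψ θ j y) y := by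
  have H := ((((hasDerivAt_aux1 j h y).csinh).div_const
      (Complex.cosh ((j : ℂ) * (h : ℂ)))).mul_const (ψ j)).sub
    ((((hasDerivAt_aux2 j y).ccosh).div_const
      ((j : ℂ) * Complex.cosh ((j : ℂ) * (h : ℂ)))).mul_const (θ j))
  have H2 := H.comp_ofReal
  convert H2 using 1
  · funext t; rfl
  · unfold flatCoef; ring

lemma hasDerivAt_eexp (j : ℤ) (x : ℝ) :
    HasDerivAt (fun t : ℝ => Complex.exp (Complex.I * (j : ℂ) * (t : ℂ)))
      (Complex.I * (j : ℂ) * Complex.exp (Complex.I * (j : ℂ) * (x : ℂ))) x := by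
  have h1 : HasDerivAt (fun z : ℂ => Complex.exp (Complex.I * (j : ℂ) * z))
      (Complex.exp (Complex.I * (j : ℂ) * (x : ℂ)) * (Complex.I * (j : ℂ))) (x : ℂ) := by
    simpa using ((hasDerivAt_id ((x : ℝ) : ℂ)).const_mul (Complex.I * (j : ℂ))).cexp
  have := h1.comp_ofReal
  convert this using 1
  ring

lemma contDiff_flatCoef (h : ℝ) (ψ θ : ℤ → ℂ) (j : ℤ) {n : WithTop ℕ∞} :
    ContDiff ℝ n (fun y : ℝ => flatCoef h ψ θ j y) := by
  have c1 : ContDiff ℂ n (fun z : ℂ =>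
      Complex.cosh ((j : ℂ) * (z + (h : ℂ))) / Complex.cosh ((j : ℂ) * (h : ℂ)) * ψ j
        - Complex.sinh ((j : ℂ) * z) / ((j : ℂ) * Complex.cosh ((j : ℂ) * (h : ℂ))) * θ j) := by
    apply ContDiff.sub
    · exact (((contDiff_cosh.comp (contDiff_const.mul (contDiff_id.add contDiff_const))).div_const
        _).mul contDiff_const)
    · exact (((contDiff_sinh.comp (contDiff_const.mul contDiff_id)).div_const _).mul contDiff_const)
  exact (c1.restrict_scalars ℝ).comp Complex.ofRealCLM.contDiff

lemma contDiff_eexp (j : ℤ) {n : WithTop ℕ∞} :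
    ContDiff ℝ n (fun x : ℝ => Complex.exp (Complex.I * (j : ℂ) * (x : ℂ))) := by
  have c1 : ContDiff ℂ n (fun z : ℂ => Complex.exp (Complex.I * (j : ℂ) * z)) :=
    Complex.contDiff_exp.comp (contDiff_const.mul contDiff_id)
  exact (c1.restrict_scalars ℝ).comp Complex.ofRealCLM.contDiff

lemma phiFlat_eq_sum (h : ℝ) (ψ θ : ℤ → ℂ) {T : Finset ℤ} (hT0 : (0 : ℤ) ∉ T)
    (hTψ : ∀ j : ℤ, j ≠ 0 → ψ j ≠ 0 → j ∈ T) (hTθ : ∀ j : ℤ, j ≠ 0 → θ j ≠ 0 → j ∈ T)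
    (x y : ℝ) :
    phiFlat h ψ θ x y = ψ 0 - θ 0 * (y : ℂ) +
      ∑ j ∈ T, flatCoef h ψ θ j y * Complex.exp (Complex.I * (j : ℂ) * (x : ℂ)) := by
  classical
  unfold phiFlat
  congr 1
  rw [finsum_congr (fun j => finsum_eq_if (p := j ≠ 0))]
  rw [finsum_eq_sum_of_support_subset _ (s := T) ?_]
  · refine Finset.sum_congr rfl fun j hj => ?_
    rw [if_pos (by rintro rfl; exact hT0 hj)]
    rfl
  · intro j hj
    simp only [Function.mem_support] at hj
    by_cases hj0 : j = 0
    · simp [hj0] at hj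
    rw [if_pos hj0] at hj
    by_cases hψj : ψ j = 0
    · by_cases hθj : θ j = 0
      · simp [hψj, hθj] at hj
      · exact hTθ j hj0 hθj
    · exact hTψ j hj0 hψj

/-- `φ` is smooth on `ℝ²`, `2π`-periodic in `x`, harmonic, satisfies the Dirichlet
condition at `y = 0` and the Neumann condition at `y = −h`. -/
theorem flat_bvp_solution (h : ℝ) (hh : 0 < h) (ψ θ : ℤ → ℂ)
    (hψ : (Function.support ψ).Finite) (hθ : (Function.support θ).Finite) :
    ContDiff ℝ ((⊤ : ℕ∞) : WithTop ℕ∞) (fun p : ℝ × ℝ => phiFlat h ψ θ p.1 p.2) ∧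
    (∀ x y : ℝ, phiFlat h ψ θ (x + 2 * Real.pi) y = phiFlat h ψ θ x y) ∧
    (∀ x y : ℝ, iteratedDeriv 2 (fun t => phiFlat h ψ θ t y) x
        + iteratedDeriv 2 (fun t => phiFlat h ψ θ x t) y = 0) ∧
    (∀ x : ℝ, phiFlat h ψ θ x 0
        = ∑ᶠ j : ℤ, ψ j * Complex.exp (Complex.I * (j : ℂ) * (x : ℂ))) ∧
    (∀ x : ℝ, -deriv (fun t => phiFlat h ψ θ x t) (-h)
        = ∑ᶠ j : ℤ, θ j * Complex.exp (Complex.I * (j : ℂ) * (x : ℂ))) := by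
  classical
  set T : Finset ℤ := ((hψ.union hθ).toFinset).erase 0 with hTdef
  have hT0 : (0 : ℤ) ∉ T := Finset.notMem_erase _ _
  have hTψ : ∀ j : ℤ, j ≠ 0 → ψ j ≠ 0 → j ∈ T := fun j hj hp =>
    Finset.mem_erase.2 ⟨hj, (Set.Finite.mem_toFinset _).2 (Or.inl hp)⟩
  have hTθ : ∀ j : ℤ, j ≠ 0 → θ j ≠ 0 → j ∈ T := fun j hj hp =>
    Finset.mem_erase.2 ⟨hj, (Set.Finite.mem_toFinset _).2 (Or.inr hp)⟩
  have hTj : ∀ j ∈ T, (j : ℤ) ≠ 0 := fun j hj => (Finset.mem_erase.1 hj).1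
  have key := phiFlat_eq_sum h ψ θ hT0 hTψ hTθ
  have hcosh : ∀ j : ℤ, Complex.cosh ((j : ℂ) * (h : ℂ)) ≠ 0 := by
    intro j
    have e : ((j : ℂ) * (h : ℂ)) = ((j * h : ℝ) : ℂ) := by push_cast; ring
    rw [e, ← Complex.ofReal_cosh]
    exact_mod_cast (Real.cosh_pos _).ne'
  have hfin : ∀ (f : ℤ → ℂ) (x : ℝ), (∀ j : ℤ, j ≠ 0 → f j ≠ 0 → j ∈ T) →
      ∑ᶠ j : ℤ, f j * Complex.exp (Complex.I * (j : ℂ) * (x : ℂ))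
        = f 0 + ∑ j ∈ T, f j * Complex.exp (Complex.I * (j : ℂ) * (x : ℂ)) := by
    intro f x hf
    have hsub : Function.support
        (fun j : ℤ => f j * Complex.exp (Complex.I * (j : ℂ) * (x : ℂ))) ⊆ ↑(insert 0 T) := by
      intro j hj
      simp only [Function.mem_support] at hj
      have hfj : f j ≠ 0 := fun hc => hj (by simp [hc])
      by_cases hj0 : j = 0
      · simp [hj0]
      · exact Finset.mem_insert_of_mem (hf j hj0 hfj)
    rw [finsum_eq_sum_of_support_subset _ hsub, Finset.sum_insert hT0]
    norm_num
  have hy1 : ∀ (x t : ℝ), HasDerivAt (fun s : ℝ => phiFlat h ψ θ x s)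
      (-(θ 0) + ∑ j ∈ T, (j : ℂ) * flatCoefD h ψ θ j t
        * Complex.exp (Complex.I * (j : ℂ) * (x : ℂ))) t := by
    intro x t
    have hfun : (fun s : ℝ => phiFlat h ψ θ x s) = fun s : ℝ =>
        ψ 0 - θ 0 * (s : ℂ) + ∑ j ∈ T, flatCoef h ψ θ j s
          * Complex.exp (Complex.I * (j : ℂ) * (x : ℂ)) :=
      funext fun s => key x s
    rw [hfun]
    have h1 : HasDerivAt (fun s : ℝ => ψ 0 - θ 0 * (s : ℂ)) (-(θ 0)) t := by
      have h2 := (Complex.ofRealCLM.hasDerivAt (x := t)).const_mul (θ 0)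
      simpa using (hasDerivAt_const t (ψ 0)).fun_sub h2
    exact h1.add (HasDerivAt.fun_sum fun j _ => (hasDerivAt_flatCoef h ψ θ j t).mul_const _)
  refine ⟨?_, ?_, ?_, ?_, ?_⟩
  · -- smoothness
    have e : (fun p : ℝ × ℝ => phiFlat h ψ θ p.1 p.2)
        = fun p : ℝ × ℝ => ψ 0 - θ 0 * ((p.2 : ℝ) : ℂ) +
          ∑ j ∈ T, flatCoef h ψ θ j p.2 * Complex.exp (Complex.I * (j : ℂ) * ((p.1 : ℝ) : ℂ)) :=
      funext fun p => key p.1 p.2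
    rw [e]
    apply ContDiff.add
    · exact contDiff_const.sub
        (contDiff_const.mul ((Complex.ofRealCLM.contDiff).comp contDiff_snd))
    · exact ContDiff.sum fun j _ =>
        ((contDiff_flatCoef h ψ θ j).comp contDiff_snd).mul ((contDiff_eexp j).comp contDiff_fst)
  · -- periodicity
    intro x y
    rw [key, key]
    congr 1
    refine Finset.sum_congr rfl fun j hj => ?_
    congr 1
    have e : Complex.I * (j : ℂ) * ((x + 2 * Real.pi : ℝ) : ℂ)
        = Complex.I * (j : ℂ) * (x : ℂ) + (j : ℂ) * (2 * (Real.pi : ℂ) * Complex.I) := by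
      push_cast; ring
    rw [e, Complex.exp_add, Complex.exp_int_mul_two_pi_mul_I, mul_one]
  · -- harmonicity
    intro x y
    have hx1 : ∀ t : ℝ, HasDerivAt (fun s : ℝ => phiFlat h ψ θ s y)
        (∑ j ∈ T, flatCoef h ψ θ j y
          * (Complex.I * (j : ℂ) * Complex.exp (Complex.I * (j : ℂ) * (t : ℂ)))) t := by
      intro t
      have hfun : (fun s : ℝ => phiFlat h ψ θ s y) = fun s : ℝ =>
          ψ 0 - θ 0 * (y : ℂ) + ∑ j ∈ T, flatCoef h ψ θ j y
            * Complex.exp (Complex.I * (j : ℂ) * (s : ℂ)) :=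
        funext fun s => key s y
      rw [hfun]
      exact (HasDerivAt.fun_sum fun j _ =>
        (hasDerivAt_eexp j t).const_mul (flatCoef h ψ θ j y)).const_add _
    have hdx : deriv (fun s : ℝ => phiFlat h ψ θ s y) = fun t : ℝ =>
        ∑ j ∈ T, flatCoef h ψ θ j y
          * (Complex.I * (j : ℂ) * Complex.exp (Complex.I * (j : ℂ) * (t : ℂ))) :=
      funext fun t => (hx1 t).deriv
    have hx2 : HasDerivAt (fun t : ℝ =>
        ∑ j ∈ T, flatCoef h ψ θ j y
          * (Complex.I * (j : ℂ) * Complex.exp (Complex.I * (j : ℂ) * (t : ℂ))))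
        (∑ j ∈ T, flatCoef h ψ θ j y * (Complex.I * (j : ℂ)
          * (Complex.I * (j : ℂ) * Complex.exp (Complex.I * (j : ℂ) * (x : ℂ))))) x :=
      HasDerivAt.fun_sum fun j _ =>
        ((hasDerivAt_eexp j x).const_mul (Complex.I * (j : ℂ))).const_mul (flatCoef h ψ θ j y)
    have ix : iteratedDeriv 2 (fun t : ℝ => phiFlat h ψ θ t y) x
        = ∑ j ∈ T, flatCoef h ψ θ j y * (Complex.I * (j : ℂ)
          * (Complex.I * (j : ℂ) * Complex.exp (Complex.I * (j : ℂ) * (x : ℂ)))) := by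
      rw [iteratedDeriv_succ, iteratedDeriv_one, hdx]
      exact hx2.deriv
    have hdy : deriv (fun s : ℝ => phiFlat h ψ θ x s) = fun t : ℝ =>
        -(θ 0) + ∑ j ∈ T, (j : ℂ) * flatCoefD h ψ θ j t
          * Complex.exp (Complex.I * (j : ℂ) * (x : ℂ)) :=
      funext fun t => (hy1 x t).deriv
    have hy2 : HasDerivAt (fun t : ℝ =>
        -(θ 0) + ∑ j ∈ T, (j : ℂ) * flatCoefD h ψ θ j t
          * Complex.exp (Complex.I * (j : ℂ) * (x : ℂ)))
        (∑ j ∈ T, (j : ℂ) * ((j : ℂ) * flatCoef h ψ θ j y)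
          * Complex.exp (Complex.I * (j : ℂ) * (x : ℂ))) y :=
      (HasDerivAt.fun_sum fun j _ =>
        (((hasDerivAt_flatCoefD h ψ θ j y).const_mul (j : ℂ)).mul_const _)).const_add _
    have iy : iteratedDeriv 2 (fun t : ℝ => phiFlat h ψ θ x t) y
        = ∑ j ∈ T, (j : ℂ) * ((j : ℂ) * flatCoef h ψ θ j y)
          * Complex.exp (Complex.I * (j : ℂ) * (x : ℂ)) := by
      rw [iteratedDeriv_succ, iteratedDeriv_one, hdy]
      exact hy2.deriv
    rw [ix, iy, ← Finset.sum_add_distrib]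
    refine Finset.sum_eq_zero fun j hj => ?_
    have hI := Complex.I_sq
    linear_combination (flatCoef h ψ θ j y * (j : ℂ) ^ 2
      * Complex.exp (Complex.I * (j : ℂ) * (x : ℂ))) * hI
  · -- Dirichlet
    intro x
    rw [key, hfin ψ x hTψ]
    have hc : ∀ j ∈ T, flatCoef h ψ θ j 0 * Complex.exp (Complex.I * (j : ℂ) * (x : ℂ))
        = ψ j * Complex.exp (Complex.I * (j : ℂ) * (x : ℂ)) := by
      intro j hj
      congr 1
      unfold flatCoef
      rw [Complex.ofReal_zero, zero_add, mul_zero, Complex.sinh_zero, zero_div, zero_mul,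
        sub_zero, div_self (hcosh j), one_mul]
    rw [Finset.sum_congr rfl hc]
    norm_num
  · -- Neumann
    intro x
    rw [(hy1 x (-h)).deriv, hfin θ x hTθ]
    have hc : ∀ j ∈ T, (j : ℂ) * flatCoefD h ψ θ j (-h)
        * Complex.exp (Complex.I * (j : ℂ) * (x : ℂ))
        = -(θ j * Complex.exp (Complex.I * (j : ℂ) * (x : ℂ))) := by
      intro j hj
      have hj0 : (j : ℂ) ≠ 0 := Int.cast_ne_zero.2 (hTj j hj)
      have e0 : flatCoefD h ψ θ j (-h) = -(θ j) / (j : ℂ) := by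
        unfold flatCoefD
        rw [Complex.ofReal_neg]
        have e1 : (j : ℂ) * (-(h : ℂ) + (h : ℂ)) = 0 := by ring
        have e2 : (j : ℂ) * (-(h : ℂ)) = -((j : ℂ) * (h : ℂ)) := by ring
        rw [e1, e2, Complex.sinh_zero, Complex.cosh_neg, zero_div, zero_mul, zero_sub]
        rw [neg_div, neg_inj, div_mul_eq_mul_div, div_eq_div_iff (mul_ne_zero hj0 (hcosh j)) hj0]
        ring
      rw [e0]
      field_simp
    rw [Finset.sum_congr rfl hc]
    simp [Finset.sum_neg_distrib]
    ring
end

section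
/- If ψ̂ = 0, then for all x ∈ ℝ one has ∂φ/∂y(x,0) = − Σ_{j∈ℤ} (1/cosh(h·j))·θ̂(j)·e^{ijx}. In other words, the Neumann–Neumann operator at the flat configuration (η = 0, β = 0) is the Fourier multiplier G^{NN}(0,0) = −1/cosh(h·|D|). -/
open Complex

/-- If `ψ̂ = 0`, then `∂φ/∂y(x,0) = −Σ_j (1/cosh(hj)) θ̂(j) e^{ijx}`:
the Neumann–Neumann operator at the flat configuration is `−1/cosh(h|D|)`. -/
theorem NN_flat_configuration (h : ℝ) (hh : 0 < h) (ψ θ : ℤ → ℂ)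
    (hθ : (Function.support θ).Finite) (hψ0 : ψ = 0) :
    ∀ x : ℝ, deriv (fun t => phiFlat h ψ θ x t) 0
      = -∑ᶠ j : ℤ, (1 / Complex.cosh ((h : ℂ) * (j : ℂ))) * θ j
          * Complex.exp (Complex.I * (j : ℂ) * (x : ℂ)) := by
  subst hψ0
  intro x
  classical
  set S : Finset ℤ := insert 0 hθ.toFinset with hS
  set e : ℤ → ℂ := fun j => Complex.exp (Complex.I * (j : ℂ) * (x : ℂ)) with he
  set F : ℤ → ℝ → ℂ := fun j t =>
    -(Complex.sinh ((j : ℂ) * (t : ℂ)) / ((j : ℂ) * Complex.cosh ((j : ℂ) * (h : ℂ))) * θ j * e j)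
    with hF
  have hrep : (fun t : ℝ => phiFlat h 0 θ x t)
      = fun t : ℝ => -θ 0 * (t : ℂ) + ∑ j ∈ S, F j t := by
    funext t
    simp only [phiFlat, Pi.zero_apply, mul_zero, zero_sub, hF, he]
    congr 1
    · ring
    have h1 : ∀ j : ℤ, (∑ᶠ _ : j ≠ 0,
        (-(Complex.sinh ((j : ℂ) * (t : ℂ)) / ((j : ℂ) * Complex.cosh ((j : ℂ) * (h : ℂ))) * θ j))
          * Complex.exp (Complex.I * (j : ℂ) * (x : ℂ)))
        = F j t := by
      intro j
      rw [finsum_eq_if]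
      by_cases hj : j = 0
      · simp [hj, hF]
      · simp only [hj, if_pos, hF, he]; rw [if_pos hj]; ring
    rw [funext h1]
    refine finsum_eq_sum_of_support_subset _ ?_
    intro j hj
    have hθj : θ j ≠ 0 := by
      intro h0
      apply hj
      simp [hF, h0]
    simp [hS, hθ.mem_toFinset, hθj]
  -- derivative of each term
  set D : ℤ → ℂ := fun j =>
    -((j : ℂ) / ((j : ℂ) * Complex.cosh ((j : ℂ) * (h : ℂ))) * θ j * e j) with hD
  have hderiv : ∀ j ∈ S, HasDerivAt (F j) (D j) 0 := by
    intro j _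
    have hs : HasDerivAt (fun t : ℝ => Complex.sinh ((j : ℂ) * (t : ℂ))) ((j : ℂ)) 0 := by
      have h1 : HasDerivAt (fun z : ℂ => Complex.sinh ((j : ℂ) * z))
          (Complex.cosh ((j : ℂ) * 0) * ((j : ℂ) * 1)) 0 :=
        (Complex.hasDerivAt_sinh _).comp 0 ((hasDerivAt_id (0 : ℂ)).const_mul (j : ℂ))
      have h2 := h1.comp_ofReal (z := 0)
      simpa using h2
    have := (((hs.div_const ((j : ℂ) * Complex.cosh ((j : ℂ) * (h : ℂ)))).mul_const
      (θ j)).mul_const (e j)).fun_neg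
    simpa [hF] using this
  have hlin : HasDerivAt (fun t : ℝ => -θ 0 * (t : ℂ)) (-θ 0) 0 := by
    have h1 : HasDerivAt (fun t : ℝ => (t : ℂ)) 1 0 := by
      simpa using ((hasDerivAt_id (0 : ℂ)).comp_ofReal (z := 0))
    simpa using h1.const_mul (-θ 0)
  have htot : HasDerivAt (fun t : ℝ => -θ 0 * (t : ℂ) + ∑ j ∈ S, F j t)
      (-θ 0 + ∑ j ∈ S, D j) 0 := hlin.add (HasDerivAt.fun_sum hderiv)
  rw [hrep, htot.deriv]
  -- rewrite RHS finsum as a finite sum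
  have hrhs : ∑ᶠ j : ℤ, (1 / Complex.cosh ((h : ℂ) * (j : ℂ))) * θ j * e j
      = ∑ j ∈ S, (1 / Complex.cosh ((h : ℂ) * (j : ℂ))) * θ j * e j := by
    refine finsum_eq_sum_of_support_subset _ ?_
    intro j hj
    have hθj : θ j ≠ 0 := by
      intro h0; apply hj; simp [h0]
    simp [hS, hθ.mem_toFinset, hθj]
  rw [show (∑ᶠ j : ℤ, (1 / Complex.cosh ((h : ℂ) * (j : ℂ))) * θ j
      * Complex.exp (Complex.I * (j : ℂ) * (x : ℂ))) = ∑ᶠ j : ℤ,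
      (1 / Complex.cosh ((h : ℂ) * (j : ℂ))) * θ j * e j from rfl, hrhs]
  have key : ∑ j ∈ S, (D j + (1 / Complex.cosh ((h : ℂ) * (j : ℂ))) * θ j * e j) = θ 0 := by
    rw [Finset.sum_eq_single 0]
    · simp [hD, he]
    · intro j _ hj
      have hjc : (j : ℂ) ≠ 0 := Int.cast_ne_zero.mpr hj
      have : (j : ℂ) / ((j : ℂ) * Complex.cosh ((j : ℂ) * (h : ℂ)))
          = 1 / Complex.cosh ((j : ℂ) * (h : ℂ)) := by
        simpa using mul_div_mul_left 1 (Complex.cosh ((j : ℂ) * (h : ℂ))) hjc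
      rw [hD]
      simp only [this]
      rw [mul_comm ((j : ℂ)) ((h : ℂ))]
      ring
    · intro h0
      exact absurd (Finset.mem_insert_self 0 _) h0
  have hds : ∑ j ∈ S, (D j + (1 / Complex.cosh ((h : ℂ) * (j : ℂ))) * θ j * e j)
      = ∑ j ∈ S, D j + ∑ j ∈ S, (1 / Complex.cosh ((h : ℂ) * (j : ℂ))) * θ j * e j :=
    Finset.sum_add_distrib
  rw [hds] at key
  linear_combination key
end

section
/- The function g : ℝ → ℂ defined by g(w) = R·sinh(jw)/(j·(m·sinh(hj) − cosh(hj))) + Ψ·(cosh(j(w+h)) − m·sinh(j(w+h)))/(cosh(hj) − m·sinh(hj)) satisfies: g''(w) = j²·g(w) for all w ∈ ℝ, g(0) = Ψ, and m·j·g(−h) + g'(−h) = −R. (This is the mode-wise verification of the Green's-function solution formula for the flattened boundary value problem with nonhomogeneous Neumann condition at the bottom.) -/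
open Complex

/-- Mode-wise verification of the Green's-function solution formula for the flattened
boundary value problem with nonhomogeneous Neumann condition at the bottom:
`g'' = j² g`, `g(0) = Ψ`, and `m·j·g(−h) + g'(−h) = −R`. -/
theorem mode_solution_formula (h : ℝ) (hh : 0 < h) (j : ℝ) (hj : j ≠ 0) (m : ℂ)
    (hm : Complex.cosh ((h : ℂ) * (j : ℂ)) - m * Complex.sinh ((h : ℂ) * (j : ℂ)) ≠ 0)
    (Ψ R : ℂ) :
    let g : ℝ → ℂ := fun w =>
      R * Complex.sinh ((j : ℂ) * (w : ℂ))
          / ((j : ℂ) * (m * Complex.sinh ((h : ℂ) * (j : ℂ)) - Complex.cosh ((h : ℂ) * (j : ℂ))))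
        + Ψ * (Complex.cosh ((j : ℂ) * ((w : ℂ) + (h : ℂ)))
              - m * Complex.sinh ((j : ℂ) * ((w : ℂ) + (h : ℂ))))
          / (Complex.cosh ((h : ℂ) * (j : ℂ)) - m * Complex.sinh ((h : ℂ) * (j : ℂ)))
    (∀ w : ℝ, iteratedDeriv 2 g w = (j : ℂ) ^ 2 * g w) ∧
      g 0 = Ψ ∧
      m * (j : ℂ) * g (-h) + deriv g (-h) = -R := by
  intro g
  set D1 : ℂ := (j : ℂ) * (m * Complex.sinh ((h : ℂ) * (j : ℂ)) - Complex.cosh ((h : ℂ) * (j : ℂ))) with hD1def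
  set D2 : ℂ := Complex.cosh ((h : ℂ) * (j : ℂ)) - m * Complex.sinh ((h : ℂ) * (j : ℂ)) with hD2def
  have hjc : (j : ℂ) ≠ 0 := by exact_mod_cast hj
  have hD1 : D1 ≠ 0 := by
    refine mul_ne_zero hjc fun h0 => hm ?_
    rw [hD2def]; linear_combination -h0
  -- derivative of z ↦ sinh (j z)
  have hs : ∀ z : ℂ, HasDerivAt (fun z : ℂ => Complex.sinh ((j : ℂ) * z))
      ((j : ℂ) * Complex.cosh ((j : ℂ) * z)) z := fun z => by
    simpa [Function.comp_def, mul_comm] using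
      (Complex.hasDerivAt_sinh ((j : ℂ) * z)).comp z ((hasDerivAt_id z).const_mul (j : ℂ))
  have hc : ∀ z : ℂ, HasDerivAt (fun z : ℂ => Complex.cosh ((j : ℂ) * z))
      ((j : ℂ) * Complex.sinh ((j : ℂ) * z)) z := fun z => by
    simpa [Function.comp_def, mul_comm] using
      (Complex.hasDerivAt_cosh ((j : ℂ) * z)).comp z ((hasDerivAt_id z).const_mul (j : ℂ))
  have hs' : ∀ z : ℂ, HasDerivAt (fun z : ℂ => Complex.sinh ((j : ℂ) * (z + (h : ℂ))))
      ((j : ℂ) * Complex.cosh ((j : ℂ) * (z + (h : ℂ)))) z := fun z => by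
    simpa [Function.comp_def] using (hs (z + (h : ℂ))).comp z ((hasDerivAt_id z).add_const (h : ℂ))
  have hc' : ∀ z : ℂ, HasDerivAt (fun z : ℂ => Complex.cosh ((j : ℂ) * (z + (h : ℂ))))
      ((j : ℂ) * Complex.sinh ((j : ℂ) * (z + (h : ℂ)))) z := fun z => by
    simpa [Function.comp_def] using (hc (z + (h : ℂ))).comp z ((hasDerivAt_id z).add_const (h : ℂ))
  -- E and its derivatives
  set E : ℂ → ℂ := fun z =>
    R * Complex.sinh ((j : ℂ) * z) / D1
      + Ψ * (Complex.cosh ((j : ℂ) * (z + (h : ℂ))) - m * Complex.sinh ((j : ℂ) * (z + (h : ℂ)))) / D2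
    with hEdef
  set E' : ℂ → ℂ := fun z =>
    R * ((j : ℂ) * Complex.cosh ((j : ℂ) * z)) / D1
      + Ψ * ((j : ℂ) * Complex.sinh ((j : ℂ) * (z + (h : ℂ)))
          - m * ((j : ℂ) * Complex.cosh ((j : ℂ) * (z + (h : ℂ))))) / D2 with hE'def
  have hE : ∀ z : ℂ, HasDerivAt E (E' z) z := fun z => by
    exact ((((hs z).const_mul R).div_const D1).add
      ((((hc' z).sub ((hs' z).const_mul m)).const_mul Ψ).div_const D2))
  have hE' : ∀ z : ℂ, HasDerivAt E' ((j : ℂ) ^ 2 * E z) z := fun z => by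
    have := ((((hc z).const_mul ((j:ℂ))).const_mul R).div_const D1).add
      (((((hs' z).const_mul ((j:ℂ))).sub
        (((hc' z).const_mul ((j:ℂ))).const_mul m)).const_mul Ψ).div_const D2)
    refine this.congr_deriv ?_
    simp only [E]
    ring
  have hg : ∀ w : ℝ, HasDerivAt g (E' w) w := fun w => (hE w).comp_ofReal
  have hg' : ∀ w : ℝ, HasDerivAt (fun w : ℝ => E' w) ((j : ℂ) ^ 2 * g w) w := fun w =>
    (hE' w).comp_ofReal
  have hderiv : deriv g = fun w : ℝ => E' w := funext fun w => (hg w).deriv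
  refine ⟨fun w => ?_, ?_, ?_⟩
  · rw [iteratedDeriv_succ, iteratedDeriv_one, hderiv]
    exact (hg' w).deriv
  · simp only [g, Complex.ofReal_zero, mul_zero, Complex.sinh_zero, zero_add, zero_div]
    rw [mul_comm ((j:ℂ)) ((h:ℂ))]
    exact mul_div_cancel_right₀ Ψ hm
  · rw [hderiv]
    simp only [g, hE'def, Complex.ofReal_neg, mul_neg, neg_add_cancel, Complex.sinh_zero,
      Complex.cosh_zero, Complex.sinh_neg, Complex.cosh_neg, mul_zero, mul_one, sub_zero]
    rw [hD1def, hD2def]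
    have hne : m * Complex.sinh ((j : ℂ) * (h : ℂ)) - Complex.cosh ((j : ℂ) * (h : ℂ)) ≠ 0 :=
      fun h0 => hm (by rw [hD2def, mul_comm (h : ℂ)]; linear_combination -h0)
    field_simp
    ring_nf
end

section
/- If g : ℝ → ℂ is twice differentiable and satisfies g''(w) = j²·g(w) for all w ∈ ℝ, g(0) = 0, and m·j·g(−h) + g'(−h) = 0, then g(w) = 0 for all w ∈ ℝ. (This is the uniqueness statement for each Fourier mode of the flattened boundary value problem with nonhomogeneous Neumann condition at the bottom.) -/
open Complex

/-- Uniqueness for each Fourier mode of the flattened boundary value problem with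
nonhomogeneous Neumann condition at the bottom: if `g'' = j² g`, `g(0) = 0` and
`m·j·g(−h) + g'(−h) = 0`, then `g ≡ 0`. -/
theorem mode_uniqueness (h : ℝ) (hh : 0 < h) (j : ℝ) (hj : j ≠ 0) (m : ℂ)
    (hm : Complex.cosh ((h : ℂ) * (j : ℂ)) - m * Complex.sinh ((h : ℂ) * (j : ℂ)) ≠ 0)
    (g : ℝ → ℂ)
    (hg : Differentiable ℝ g) (hg' : Differentiable ℝ (deriv g))
    (hode : ∀ w : ℝ, deriv (deriv g) w = (j : ℂ) ^ 2 * g w)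
    (h0 : g 0 = 0)
    (hbot : m * (j : ℂ) * g (-h) + deriv g (-h) = 0) :
    ∀ w : ℝ, g w = 0 := by
  set jc : ℂ := (j : ℂ) with hjcdef
  have hjcne : jc ≠ 0 := by
    simpa [hjcdef] using Complex.ofReal_ne_zero.mpr hj
  set c : ℂ := deriv g 0 with hcdef
  -- integrating factor: for s² = 1, (g' - s·j·g)·exp(s·j·w) is constant
  have key : ∀ s : ℂ, s ^ 2 = 1 → ∀ w : ℝ,
      (deriv g w - s * jc * g w) * Complex.exp (s * jc * w) = c := by
    intro s hs w
    have hconst : ∀ x : ℝ, HasDerivAt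
        (fun w : ℝ => (deriv g w - s * jc * g w) * Complex.exp (s * jc * w)) 0 x := by
      intro x
      have hgx : HasDerivAt g (deriv g x) x := (hg x).hasDerivAt
      have hg'x : HasDerivAt (deriv g) (jc ^ 2 * g x) x := by
        have := (hg' x).hasDerivAt
        rwa [hode x] at this
      have hu : HasDerivAt (fun w : ℝ => deriv g w - s * jc * g w)
          (jc ^ 2 * g x - s * jc * deriv g x) x := hg'x.sub (hgx.const_mul (s * jc))
      have he : HasDerivAt (fun w : ℝ => Complex.exp (s * jc * w))
          (s * jc * Complex.exp (s * jc * (x : ℂ))) x := by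
        have h1 : HasDerivAt (fun z : ℂ => Complex.exp (s * jc * z))
            (Complex.exp (s * jc * (x : ℂ)) * (s * jc)) (x : ℂ) := by
          simpa using ((hasDerivAt_id (x : ℂ)).const_mul (s * jc)).cexp
        have h2 := h1.comp_ofReal
        simpa [mul_comm] using h2
      have hmul := hu.mul he
      refine hmul.congr_deriv (Eq.symm ?_)
      have : Complex.exp (s * jc * (x:ℂ)) * (jc ^ 2 * g x) * (s ^ 2 - 1) = 0 := by
        rw [hs]; ring
      linear_combination (jc ^ 2 * g x * Complex.exp (s * jc * (x:ℂ))) * hs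
    have hcst := is_const_of_deriv_eq_zero (f := fun w : ℝ =>
        (deriv g w - s * jc * g w) * Complex.exp (s * jc * w))
        (fun x => (hconst x).differentiableAt) (fun x => (hconst x).deriv) w 0
    simpa [h0] using hcst
  have hE : ∀ w : ℝ, Complex.exp (jc * w) * Complex.exp (-(jc * w)) = 1 := by
    intro w; rw [← Complex.exp_add]; simp
  have main : ∀ w : ℝ, 2 * jc * g w = c * (Complex.exp (jc * w) - Complex.exp (-(jc * w))) ∧
      2 * deriv g w = c * (Complex.exp (jc * w) + Complex.exp (-(jc * w))) := by
    intro w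
    have e1 := key 1 (by ring) w
    have e2 := key (-1) (by ring) w
    simp only [one_mul, neg_one_mul, sub_neg_eq_add, neg_mul] at e1 e2
    have q1 : deriv g w - jc * g w = c * Complex.exp (-(jc * w)) := by
      linear_combination Complex.exp (-(jc * w)) * e1 - (deriv g w - jc * g w) * hE w
    have q2 : deriv g w + jc * g w = c * Complex.exp (jc * w) := by
      linear_combination Complex.exp (jc * w) * e2 - (deriv g w + jc * g w) * hE w
    constructor
    · linear_combination q2 - q1
    · linear_combination q1 + q2
  -- evaluate at w = -h
  have hgh := (main (-h)).1
  have hdh := (main (-h)).2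
  have harg : jc * ((-h : ℝ) : ℂ) = -((h : ℂ) * jc) := by push_cast; ring
  rw [harg, neg_neg] at hgh hdh
  have key0 : c * (Complex.cosh ((h : ℂ) * jc) - m * Complex.sinh ((h : ℂ) * jc)) = 0 := by
    linear_combination hbot - hdh / 2 - (m / 2) * hgh
      + (c / 2) * Complex.two_cosh ((h : ℂ) * jc) - (c * m / 2) * Complex.two_sinh ((h : ℂ) * jc)
  have hc0 : c = 0 := by
    rcases mul_eq_zero.mp key0 with h' | h'
    · exact h'
    · exact absurd h' hm
  intro w
  have := (main w).1
  rw [hc0, zero_mul] at this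
  have h2 : (2 : ℂ) * jc ≠ 0 := mul_ne_zero two_ne_zero hjcne
  simpa [mul_eq_zero, hjcne] using this
end

section
/- For every twice continuously differentiable f : ℝ² → ℝ and every (x,w) ∈ ℝ², writing f̃ := f ∘ Σ, one has (Δf)(Σ(x,w)) = a·∂²f̃/∂w² + ∂²f̃/∂x² + b·∂²f̃/∂x∂w − c·∂f̃/∂w, all evaluated at (x,w), where a := (1+(∂σ/∂x)²)/(1+∂σ/∂w)², b := −2(∂σ/∂x)/(1+∂σ/∂w), and c := (1/(1+∂σ/∂w))·(∂²σ/∂x² + b·∂²σ/∂x∂w + a·∂²σ/∂w²), evaluated at (x,w). (This is the flattened Laplacian Δ^Σ identity.) -/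
/-- Partial derivative in the first (horizontal) variable. -/
noncomputable def pdx (g : ℝ × ℝ → ℝ) (p : ℝ × ℝ) : ℝ :=
  deriv (fun t => g (t, p.2)) p.1

/-- Partial derivative in the second (vertical) variable. -/
noncomputable def pdw (g : ℝ × ℝ → ℝ) (p : ℝ × ℝ) : ℝ :=
  deriv (fun t => g (p.1, t)) p.2

section helpers
variable {g : ℝ × ℝ → ℝ} {p : ℝ × ℝ}

lemma secX_fderiv (hg : DifferentiableAt ℝ g p) :
    HasDerivAt (fun t => g (t, p.2)) (fderiv ℝ g p (1, 0)) p.1 :=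
  hg.hasFDerivAt.comp_hasDerivAt p.1 (HasDerivAt.prodMk (hasDerivAt_id p.1) (hasDerivAt_const p.1 p.2))

lemma secW_fderiv (hg : DifferentiableAt ℝ g p) :
    HasDerivAt (fun t => g (p.1, t)) (fderiv ℝ g p (0, 1)) p.2 :=
  hg.hasFDerivAt.comp_hasDerivAt p.2 (HasDerivAt.prodMk (hasDerivAt_const p.2 p.1) (hasDerivAt_id p.2))

lemma pdx_eq (hg : DifferentiableAt ℝ g p) : pdx g p = fderiv ℝ g p (1, 0) :=
  (secX_fderiv hg).deriv

lemma pdw_eq (hg : DifferentiableAt ℝ g p) : pdw g p = fderiv ℝ g p (0, 1) :=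
  (secW_fderiv hg).deriv

lemma secX' (hg : DifferentiableAt ℝ g p) :
    HasDerivAt (fun t => g (t, p.2)) (pdx g p) p.1 := by
  rw [pdx_eq hg]; exact secX_fderiv hg

lemma secW' (hg : DifferentiableAt ℝ g p) :
    HasDerivAt (fun t => g (p.1, t)) (pdw g p) p.2 := by
  rw [pdw_eq hg]; exact secW_fderiv hg

lemma pdx_contDiff {g : ℝ × ℝ → ℝ} (h : ContDiff ℝ 2 g) : ContDiff ℝ 1 (pdx g) := by
  have h1 : ContDiff ℝ 1 (fderiv ℝ g) := h.fderiv_right (by norm_num)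
  have e : pdx g = fun r => fderiv ℝ g r (1, 0) :=
    funext fun r => pdx_eq ((h.differentiable two_ne_zero) r)
  rw [e]; exact h1.clm_apply contDiff_const

lemma pdw_contDiff {g : ℝ × ℝ → ℝ} (h : ContDiff ℝ 2 g) : ContDiff ℝ 1 (pdw g) := by
  have h1 : ContDiff ℝ 1 (fderiv ℝ g) := h.fderiv_right (by norm_num)
  have e : pdw g = fun r => fderiv ℝ g r (0, 1) :=
    funext fun r => pdw_eq ((h.differentiable two_ne_zero) r)
  rw [e]; exact h1.clm_apply contDiff_const

end helpers

section chain
variable {σ g : ℝ × ℝ → ℝ} {p : ℝ × ℝ}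

/-- w-derivative of `g ∘ Σ` along the vertical section. -/
lemma secW_comp (hσ : DifferentiableAt ℝ σ p)
    (hg : DifferentiableAt ℝ g (p.1, p.2 + σ p)) :
    HasDerivAt (fun t => g (p.1, t + σ (p.1, t)))
      ((1 + pdw σ p) * pdw g (p.1, p.2 + σ p)) p.2 := by
  have hin : HasDerivAt (fun t : ℝ => ((p.1 : ℝ), t + σ (p.1, t)))
      (((0 : ℝ), 1 + pdw σ p)) p.2 :=
    HasDerivAt.prodMk (hasDerivAt_const p.2 p.1) ((hasDerivAt_id p.2).add (secW' hσ))
  have H := hg.hasFDerivAt.comp_hasDerivAt p.2 hin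
  have hv : ((0 : ℝ), 1 + pdw σ p) = (1 + pdw σ p) • ((0 : ℝ), (1 : ℝ)) := by
    simp [Prod.ext_iff]
  rw [hv, map_smul, smul_eq_mul, ← pdw_eq hg] at H
  exact H

/-- x-derivative of `g ∘ Σ` along the horizontal section. -/
lemma secX_comp (hσ : DifferentiableAt ℝ σ p)
    (hg : DifferentiableAt ℝ g (p.1, p.2 + σ p)) :
    HasDerivAt (fun t => g (t, p.2 + σ (t, p.2)))
      (pdx g (p.1, p.2 + σ p) + pdx σ p * pdw g (p.1, p.2 + σ p)) p.1 := by
  have hin : HasDerivAt (fun t : ℝ => (t, p.2 + σ (t, p.2)))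
      (((1 : ℝ), 0 + pdx σ p)) p.1 :=
    HasDerivAt.prodMk (hasDerivAt_id p.1) ((hasDerivAt_const p.1 p.2).add (secX' hσ))
  have H := hg.hasFDerivAt.comp_hasDerivAt p.1 hin
  have hv : ((1 : ℝ), 0 + pdx σ p) = ((1 : ℝ), (0 : ℝ)) + pdx σ p • ((0 : ℝ), (1 : ℝ)) := by
    simp [Prod.ext_iff]
  rw [hv, map_add, map_smul, smul_eq_mul, ← pdw_eq hg, ← pdx_eq hg] at H
  exact H

end chain

/-- Symmetry of mixed partials for C² functions. -/
lemma pd_comm {f : ℝ × ℝ → ℝ} (hf : ContDiff ℝ 2 f) (q : ℝ × ℝ) :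
    pdw (pdx f) q = pdx (pdw f) q := by
  have hd : Differentiable ℝ f := hf.differentiable two_ne_zero
  have h1 : ContDiff ℝ 1 (fderiv ℝ f) := hf.fderiv_right (by norm_num)
  have hfd2 : DifferentiableAt ℝ (fderiv ℝ f) q := (h1.differentiable one_ne_zero) q
  have hsym := second_derivative_symmetric (f' := fderiv ℝ f)
    (f'' := fderiv ℝ (fderiv ℝ f) q) (fun y => (hd y).hasFDerivAt) hfd2.hasFDerivAt
  have e1 : pdx f = fun r => fderiv ℝ f r (1, 0) := funext fun r => pdx_eq (hd r)
  have e2 : pdw f = fun r => fderiv ℝ f r (0, 1) := funext fun r => pdw_eq (hd r)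
  have d1 : DifferentiableAt ℝ (fun r => fderiv ℝ f r ((1 : ℝ), (0 : ℝ))) q :=
    ((h1.clm_apply contDiff_const).differentiable one_ne_zero) q
  have d2 : DifferentiableAt ℝ (fun r => fderiv ℝ f r ((0 : ℝ), (1 : ℝ))) q :=
    ((h1.clm_apply contDiff_const).differentiable one_ne_zero) q
  rw [e1, e2, pdw_eq d1, pdx_eq d2,
    fderiv_clm_apply hfd2 (differentiableAt_const _),
    fderiv_clm_apply hfd2 (differentiableAt_const _)]
  simp only [fderiv_fun_const, Pi.zero_apply, ContinuousLinearMap.comp_zero, zero_add,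
    ContinuousLinearMap.add_apply, ContinuousLinearMap.flip_apply]
  exact hsym _ _
/-- The flattened Laplacian identity: for the straightening map
`Σ(x,w) = (x, w + σ(x,w))` and `f̃ = f ∘ Σ`,
`(Δf)(Σ(x,w)) = a ∂²f̃/∂w² + ∂²f̃/∂x² + b ∂²f̃/∂x∂w − c ∂f̃/∂w`, where
`a = (1+(∂σ/∂x)²)/(1+∂σ/∂w)²`, `b = −2(∂σ/∂x)/(1+∂σ/∂w)` and
`c = (1/(1+∂σ/∂w))·(∂²σ/∂x² + b ∂²σ/∂x∂w + a ∂²σ/∂w²)`. -/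
theorem flattened_laplacian (σ : ℝ × ℝ → ℝ) (hσ : ContDiff ℝ 2 σ)
    (hden : ∀ p : ℝ × ℝ, 1 + pdw σ p ≠ 0) :
    ∀ f : ℝ × ℝ → ℝ, ContDiff ℝ 2 f → ∀ p : ℝ × ℝ,
      let ftilde : ℝ × ℝ → ℝ := fun q => f (q.1, q.2 + σ q)
      let a : ℝ := (1 + (pdx σ p) ^ 2) / (1 + pdw σ p) ^ 2
      let b : ℝ := -2 * pdx σ p / (1 + pdw σ p)
      let c : ℝ := (1 / (1 + pdw σ p)) *
        (pdx (pdx σ) p + b * pdx (pdw σ) p + a * pdw (pdw σ) p)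
      pdx (pdx f) (p.1, p.2 + σ p) + pdw (pdw f) (p.1, p.2 + σ p)
        = a * pdw (pdw ftilde) p + pdx (pdx ftilde) p
          + b * pdx (pdw ftilde) p - c * pdw ftilde p := by
  intro f hf p ftilde a b c
  have hσd : Differentiable ℝ σ := hσ.differentiable two_ne_zero
  have hfd : Differentiable ℝ f := hf.differentiable two_ne_zero
  have hσx : Differentiable ℝ (pdx σ) := (pdx_contDiff hσ).differentiable one_ne_zero
  have hσw : Differentiable ℝ (pdw σ) := (pdw_contDiff hσ).differentiable one_ne_zero
  have hfx : Differentiable ℝ (pdx f) := (pdx_contDiff hf).differentiable one_ne_zero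
  have hfw : Differentiable ℝ (pdw f) := (pdw_contDiff hf).differentiable one_ne_zero
  set q : ℝ × ℝ := (p.1, p.2 + σ p) with hq
  -- first-order formulas, for every point
  have E1all : ∀ r : ℝ × ℝ, pdw ftilde r = (1 + pdw σ r) * pdw f (r.1, r.2 + σ r) :=
    fun r => (secW_comp (hσd r) (hfd _)).deriv
  have E2all : ∀ r : ℝ × ℝ, pdx ftilde r
      = pdx f (r.1, r.2 + σ r) + pdx σ r * pdw f (r.1, r.2 + σ r) :=
    fun r => (secX_comp (hσd r) (hfd _)).deriv
  -- second-order formulas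
  have Eww : pdw (pdw ftilde) p
      = pdw (pdw σ) p * pdw f q + (1 + pdw σ p) * ((1 + pdw σ p) * pdw (pdw f) q) := by
    have hfun : (fun t => pdw ftilde (p.1, t))
        = fun t => (1 + pdw σ (p.1, t)) * pdw f (p.1, t + σ (p.1, t)) :=
      funext fun t => E1all (p.1, t)
    have H : HasDerivAt (fun t => (1 + pdw σ (p.1, t)) * pdw f (p.1, t + σ (p.1, t)))
        ((0 + pdw (pdw σ) p) * pdw f q + (1 + pdw σ p) * ((1 + pdw σ p) * pdw (pdw f) q)) p.2 :=
      ((hasDerivAt_const p.2 (1:ℝ)).add (secW' (hσw p))).mul (secW_comp (hσd p) (hfw q))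
    show deriv (fun t => pdw ftilde (p.1, t)) p.2 = _
    rw [hfun, H.deriv]; ring
  have Exx : pdx (pdx ftilde) p
      = (pdx (pdx f) q + pdx σ p * pdw (pdx f) q)
        + (pdx (pdx σ) p * pdw f q
          + pdx σ p * (pdx (pdw f) q + pdx σ p * pdw (pdw f) q)) := by
    have hfun : (fun t => pdx ftilde (t, p.2))
        = fun t => pdx f (t, p.2 + σ (t, p.2)) + pdx σ (t, p.2) * pdw f (t, p.2 + σ (t, p.2)) :=
      funext fun t => E2all (t, p.2)
    have H : HasDerivAt
        (fun t => pdx f (t, p.2 + σ (t, p.2)) + pdx σ (t, p.2) * pdw f (t, p.2 + σ (t, p.2)))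
        ((pdx (pdx f) q + pdx σ p * pdw (pdx f) q)
          + (pdx (pdx σ) p * pdw f q
            + pdx σ p * (pdx (pdw f) q + pdx σ p * pdw (pdw f) q))) p.1 :=
      (secX_comp (hσd p) (hfx q)).add
        ((secX' (hσx p)).mul (secX_comp (hσd p) (hfw q)))
    show deriv (fun t => pdx ftilde (t, p.2)) p.1 = _
    rw [hfun, H.deriv]
  have Exw : pdx (pdw ftilde) p
      = pdx (pdw σ) p * pdw f q
        + (1 + pdw σ p) * (pdx (pdw f) q + pdx σ p * pdw (pdw f) q) := by
    have hfun : (fun t => pdw ftilde (t, p.2))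
        = fun t => (1 + pdw σ (t, p.2)) * pdw f (t, p.2 + σ (t, p.2)) :=
      funext fun t => E1all (t, p.2)
    have H : HasDerivAt
        (fun t => (1 + pdw σ (t, p.2)) * pdw f (t, p.2 + σ (t, p.2)))
        ((0 + pdx (pdw σ) p) * pdw f q
          + (1 + pdw σ p) * (pdx (pdw f) q + pdx σ p * pdw (pdw f) q)) p.1 :=
      ((hasDerivAt_const p.1 (1:ℝ)).add (secX' (hσw p))).mul (secX_comp (hσd p) (hfw q))
    show deriv (fun t => pdw ftilde (t, p.2)) p.1 = _
    rw [hfun, H.deriv]; ring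
  have E1 : pdw ftilde p = (1 + pdw σ p) * pdw f q := E1all p
  have hsym : pdw (pdx f) q = pdx (pdw f) q := pd_comm hf q
  have hB : (1 : ℝ) + pdw σ p ≠ 0 := hden p
  rw [Eww, Exx, Exw, E1, hsym]
  show _ = a * _ + _ + b * _ - c * _
  simp only [a, b, c]
  field_simp
  ring
end

section
/- For every twice continuously differentiable f : ℝ² → ℝ and every (x,w) ∈ ℝ², writing f̃ := f ∘ Σ, one has (1+∂σ/∂w(x,w))·(Δf)(Σ(x,w)) = div_{x,w}( P(Σ) ∇_{x,w} f̃ )(x,w), where P(Σ) is the symmetric 2×2 matrix field P(Σ) := (1+∂σ/∂w)·[[1, −(∂σ/∂x)/(1+∂σ/∂w)], [−(∂σ/∂x)/(1+∂σ/∂w), (1+(∂σ/∂x)²)/(1+∂σ/∂w)²]]. (This is the divergence-form expression of the flattened Laplacian.) -/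
lemma slice1 {g : ℝ × ℝ → ℝ} {G : ℝ × ℝ →L[ℝ] ℝ} {p : ℝ × ℝ}
    (h : HasFDerivAt g G p) :
    HasDerivAt (fun t => g (t, p.2)) (G (1, 0)) p.1 := by
  have h2 : HasDerivAt (fun t : ℝ => ((t : ℝ), p.2)) ((1 : ℝ), (0 : ℝ)) p.1 :=
    (hasDerivAt_id p.1).prodMk (hasDerivAt_const p.1 p.2)
  have h' : HasFDerivAt g G ((p.1, p.2) : ℝ × ℝ) := by simpa using h
  simpa [Function.comp_def] using h'.comp_hasDerivAt p.1 h2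

lemma slice2 {g : ℝ × ℝ → ℝ} {G : ℝ × ℝ →L[ℝ] ℝ} {p : ℝ × ℝ}
    (h : HasFDerivAt g G p) :
    HasDerivAt (fun t => g (p.1, t)) (G (0, 1)) p.2 := by
  have h2 : HasDerivAt (fun t : ℝ => (p.1, (t : ℝ))) ((0 : ℝ), (1 : ℝ)) p.2 :=
    (hasDerivAt_const p.2 p.1).prodMk (hasDerivAt_id p.2)
  have h' : HasFDerivAt g G ((p.1, p.2) : ℝ × ℝ) := by simpa using h
  simpa [Function.comp_def] using h'.comp_hasDerivAt p.2 h2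

lemma pdx_of {g : ℝ × ℝ → ℝ} {G : ℝ × ℝ →L[ℝ] ℝ} {p : ℝ × ℝ}
    (h : HasFDerivAt g G p) : pdx g p = G (1, 0) := (slice1 h).deriv

lemma pdw_of {g : ℝ × ℝ → ℝ} {G : ℝ × ℝ →L[ℝ] ℝ} {p : ℝ × ℝ}
    (h : HasFDerivAt g G p) : pdw g p = G (0, 1) := (slice2 h).deriv

lemma clm_pt {F : Type*} [NormedAddCommGroup F] [NormedSpace ℝ F]
    (L : ℝ × ℝ →L[ℝ] F) (x y : ℝ) :
    L (x, y) = x • L (1, 0) + y • L (0, 1) := by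
  have hxy : ((x, y) : ℝ × ℝ) = x • ((1 : ℝ), (0 : ℝ)) + y • ((0 : ℝ), (1 : ℝ)) := by
    simp [Prod.ext_iff]
  rw [hxy, map_add, map_smul, map_smul]

/-- Divergence-form expression of the flattened Laplacian: for the straightening map
`Σ(x,w) = (x, w + σ(x,w))` and `f̃ = f ∘ Σ`, one has
`(1+∂σ/∂w)·(Δf)(Σ(x,w)) = div_{x,w}(P(Σ)∇_{x,w}f̃)`, where
`P(Σ) = (1+∂σ/∂w)·[[1, −∂σ/∂x/(1+∂σ/∂w)], [−∂σ/∂x/(1+∂σ/∂w), (1+(∂σ/∂x)²)/(1+∂σ/∂w)²]]`. -/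
theorem flattened_laplacian_divergence_form (σ : ℝ × ℝ → ℝ) (hσ : ContDiff ℝ 2 σ)
    (hden : ∀ p : ℝ × ℝ, 1 + pdw σ p ≠ 0) :
    ∀ f : ℝ × ℝ → ℝ, ContDiff ℝ 2 f → ∀ p : ℝ × ℝ,
      let ftilde : ℝ × ℝ → ℝ := fun q => f (q.1, q.2 + σ q)
      (1 + pdw σ p) * (pdx (pdx f) (p.1, p.2 + σ p) + pdw (pdw f) (p.1, p.2 + σ p))
        = pdx (fun q => (1 + pdw σ q) *
              (1 * pdx ftilde q + (-(pdx σ q) / (1 + pdw σ q)) * pdw ftilde q)) p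
          + pdw (fun q => (1 + pdw σ q) *
              ((-(pdx σ q) / (1 + pdw σ q)) * pdx ftilde q
                + ((1 + (pdx σ q) ^ 2) / (1 + pdw σ q) ^ 2) * pdw ftilde q)) p := by
  intro f hf p ftilde
  have hσd : Differentiable ℝ σ := hσ.differentiable two_ne_zero
  have hfd : Differentiable ℝ f := hf.differentiable two_ne_zero
  set Sm : ℝ × ℝ → ℝ × ℝ := fun q => (q.1, q.2 + σ q) with hSmdef
  have hσ1 : ContDiff ℝ 1 (fderiv ℝ σ) := hσ.fderiv_right (by norm_num)
  have hf1 : ContDiff ℝ 1 (fderiv ℝ f) := hf.fderiv_right (by norm_num)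
  -- derivative of the straightening map
  have hDS : ∀ q : ℝ × ℝ, HasFDerivAt Sm
      ((ContinuousLinearMap.fst ℝ ℝ ℝ).prod
        (ContinuousLinearMap.snd ℝ ℝ ℝ + fderiv ℝ σ q)) q := fun q =>
    (hasFDerivAt_fst).prodMk ((hasFDerivAt_snd).add (hσd q).hasFDerivAt)
  -- derivative of the partial-derivative fields
  have hg1F : ∀ q : ℝ × ℝ, HasFDerivAt (fun r => fderiv ℝ f r (1, 0))
      ((ContinuousLinearMap.apply ℝ ℝ ((1 : ℝ), (0 : ℝ))).comp
        (fderiv ℝ (fderiv ℝ f) q)) q := fun q =>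
    (ContinuousLinearMap.apply ℝ ℝ ((1 : ℝ), (0 : ℝ))).hasFDerivAt.comp q
      ((hf1.differentiable one_ne_zero q).hasFDerivAt)
  have hg2F : ∀ q : ℝ × ℝ, HasFDerivAt (fun r => fderiv ℝ f r (0, 1))
      ((ContinuousLinearMap.apply ℝ ℝ ((0 : ℝ), (1 : ℝ))).comp
        (fderiv ℝ (fderiv ℝ f) q)) q := fun q =>
    (ContinuousLinearMap.apply ℝ ℝ ((0 : ℝ), (1 : ℝ))).hasFDerivAt.comp q
      ((hf1.differentiable one_ne_zero q).hasFDerivAt)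
  have hs1F : ∀ q : ℝ × ℝ, HasFDerivAt (fun r => fderiv ℝ σ r (1, 0))
      ((ContinuousLinearMap.apply ℝ ℝ ((1 : ℝ), (0 : ℝ))).comp
        (fderiv ℝ (fderiv ℝ σ) q)) q := fun q =>
    (ContinuousLinearMap.apply ℝ ℝ ((1 : ℝ), (0 : ℝ))).hasFDerivAt.comp q
      ((hσ1.differentiable one_ne_zero q).hasFDerivAt)
  have hs2F : ∀ q : ℝ × ℝ, HasFDerivAt (fun r => fderiv ℝ σ r (0, 1))
      ((ContinuousLinearMap.apply ℝ ℝ ((0 : ℝ), (1 : ℝ))).comp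
        (fderiv ℝ (fderiv ℝ σ) q)) q := fun q =>
    (ContinuousLinearMap.apply ℝ ℝ ((0 : ℝ), (1 : ℝ))).hasFDerivAt.comp q
      ((hσ1.differentiable one_ne_zero q).hasFDerivAt)
  -- chain rule for ftilde
  have hftF : ∀ q : ℝ × ℝ, HasFDerivAt ftilde
      ((fderiv ℝ f (Sm q)).comp
        ((ContinuousLinearMap.fst ℝ ℝ ℝ).prod
          (ContinuousLinearMap.snd ℝ ℝ ℝ + fderiv ℝ σ q))) q := fun q =>
    (hfd (Sm q)).hasFDerivAt.comp q (hDS q)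
  have hA1 : ∀ q : ℝ × ℝ, pdx ftilde q
      = fderiv ℝ f (Sm q) (1, 0) + fderiv ℝ σ q (1, 0) * fderiv ℝ f (Sm q) (0, 1) := by
    intro q
    rw [pdx_of (hftF q)]
    have : ((ContinuousLinearMap.fst ℝ ℝ ℝ).prod
        (ContinuousLinearMap.snd ℝ ℝ ℝ + fderiv ℝ σ q)) ((1 : ℝ), (0 : ℝ))
        = ((1 : ℝ), (0 : ℝ) + fderiv ℝ σ q (1, 0)) := by simp
    rw [ContinuousLinearMap.comp_apply, this, clm_pt]
    simp
  have hA2 : ∀ q : ℝ × ℝ, pdw ftilde q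
      = (1 + fderiv ℝ σ q (0, 1)) * fderiv ℝ f (Sm q) (0, 1) := by
    intro q
    rw [pdw_of (hftF q)]
    have : ((ContinuousLinearMap.fst ℝ ℝ ℝ).prod
        (ContinuousLinearMap.snd ℝ ℝ ℝ + fderiv ℝ σ q)) ((0 : ℝ), (1 : ℝ))
        = ((0 : ℝ), (1 : ℝ) + fderiv ℝ σ q (0, 1)) := by simp
    rw [ContinuousLinearMap.comp_apply, this, clm_pt]
    simp
  have hpdxσ : ∀ q : ℝ × ℝ, pdx σ q = fderiv ℝ σ q (1, 0) := fun q =>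
    pdx_of (hσd q).hasFDerivAt
  have hpdwσ : ∀ q : ℝ × ℝ, pdw σ q = fderiv ℝ σ q (0, 1) := fun q =>
    pdw_of (hσd q).hasFDerivAt
  have hden2 : ∀ q : ℝ × ℝ, 1 + fderiv ℝ σ q (0, 1) ≠ 0 := fun q => by
    rw [← hpdwσ q]; exact hden q
  -- rewrite the two flux functions
  have hfun1 : (fun q => (1 + pdw σ q) *
        (1 * pdx ftilde q + (-(pdx σ q) / (1 + pdw σ q)) * pdw ftilde q))
      = fun q => (1 + fderiv ℝ σ q (0, 1)) * fderiv ℝ f (Sm q) (1, 0) := by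
    funext q
    rw [hA1 q, hA2 q, hpdxσ q, hpdwσ q]
    field_simp [hden2 q]
    ring
  have hfun2 : (fun q => (1 + pdw σ q) *
        ((-(pdx σ q) / (1 + pdw σ q)) * pdx ftilde q
          + ((1 + (pdx σ q) ^ 2) / (1 + pdw σ q) ^ 2) * pdw ftilde q))
      = fun q => fderiv ℝ f (Sm q) (0, 1)
          - fderiv ℝ σ q (1, 0) * fderiv ℝ f (Sm q) (1, 0) := by
    funext q
    rw [hA1 q, hA2 q, hpdxσ q, hpdwσ q]
    field_simp [hden2 q]
    ring
  rw [hfun1, hfun2]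
  -- left-hand side second derivatives
  have hpdxf : pdx f = fun q => fderiv ℝ f q (1, 0) := funext fun q =>
    pdx_of (hfd q).hasFDerivAt
  have hpdwf : pdw f = fun q => fderiv ℝ f q (0, 1) := funext fun q =>
    pdw_of (hfd q).hasFDerivAt
  have hq' : ((p.1, p.2 + σ p) : ℝ × ℝ) = Sm p := rfl
  rw [hpdxf, hpdwf, hq', hpdwσ p]
  rw [pdx_of (hg1F (Sm p)), pdw_of (hg2F (Sm p))]
  -- derivative of the first flux at p, in direction (1,0)
  have hDSp1 : ((ContinuousLinearMap.fst ℝ ℝ ℝ).prod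
      (ContinuousLinearMap.snd ℝ ℝ ℝ + fderiv ℝ σ p)) ((1 : ℝ), (0 : ℝ))
      = ((1 : ℝ), fderiv ℝ σ p (1, 0)) := by simp
  have hDSp2 : ((ContinuousLinearMap.fst ℝ ℝ ℝ).prod
      (ContinuousLinearMap.snd ℝ ℝ ℝ + fderiv ℝ σ p)) ((0 : ℝ), (1 : ℝ))
      = ((0 : ℝ), 1 + fderiv ℝ σ p (0, 1)) := by simp
  have hg1Sm : HasFDerivAt (fun r => fderiv ℝ f (Sm r) (1, 0))
      (((ContinuousLinearMap.apply ℝ ℝ ((1 : ℝ), (0 : ℝ))).comp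
          (fderiv ℝ (fderiv ℝ f) (Sm p))).comp
        ((ContinuousLinearMap.fst ℝ ℝ ℝ).prod
          (ContinuousLinearMap.snd ℝ ℝ ℝ + fderiv ℝ σ p))) p :=
    (hg1F (Sm p)).comp p (hDS p)
  have hg2Sm : HasFDerivAt (fun r => fderiv ℝ f (Sm r) (0, 1))
      (((ContinuousLinearMap.apply ℝ ℝ ((0 : ℝ), (1 : ℝ))).comp
          (fderiv ℝ (fderiv ℝ f) (Sm p))).comp
        ((ContinuousLinearMap.fst ℝ ℝ ℝ).prod
          (ContinuousLinearMap.snd ℝ ℝ ℝ + fderiv ℝ σ p))) p :=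
    (hg2F (Sm p)).comp p (hDS p)
  -- slice derivatives at p
  have h_s2x : HasDerivAt (fun t => fderiv ℝ σ (t, p.2) (0, 1))
      (fderiv ℝ (fderiv ℝ σ) p (1, 0) (0, 1)) p.1 := by
    simpa using slice1 (hs2F p)
  have h_s1w : HasDerivAt (fun t => fderiv ℝ σ (p.1, t) (1, 0))
      (fderiv ℝ (fderiv ℝ σ) p (0, 1) (1, 0)) p.2 := by
    simpa using slice2 (hs1F p)
  have h_g1x : HasDerivAt (fun t => fderiv ℝ f (Sm (t, p.2)) (1, 0))
      (fderiv ℝ (fderiv ℝ f) (Sm p) ((1 : ℝ), fderiv ℝ σ p (1, 0)) (1, 0)) p.1 := by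
    have := slice1 hg1Sm
    simpa [hDSp1] using this
  have h_g1w : HasDerivAt (fun t => fderiv ℝ f (Sm (p.1, t)) (1, 0))
      (fderiv ℝ (fderiv ℝ f) (Sm p) ((0 : ℝ), 1 + fderiv ℝ σ p (0, 1)) (1, 0)) p.2 := by
    have := slice2 hg1Sm
    simpa [hDSp2] using this
  have h_g2w : HasDerivAt (fun t => fderiv ℝ f (Sm (p.1, t)) (0, 1))
      (fderiv ℝ (fderiv ℝ f) (Sm p) ((0 : ℝ), 1 + fderiv ℝ σ p (0, 1)) (0, 1)) p.2 := by
    have := slice2 hg2Sm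
    simpa [hDSp2] using this
  -- assemble the two divergence terms
  have hterm1 : pdx (fun q => (1 + fderiv ℝ σ q (0, 1)) * fderiv ℝ f (Sm q) (1, 0)) p
      = (0 + fderiv ℝ (fderiv ℝ σ) p (1, 0) (0, 1)) * fderiv ℝ f (Sm p) (1, 0)
        + (1 + fderiv ℝ σ p (0, 1))
          * fderiv ℝ (fderiv ℝ f) (Sm p) ((1 : ℝ), fderiv ℝ σ p (1, 0)) (1, 0) := by
    have h := ((hasDerivAt_const p.1 (1 : ℝ)).add h_s2x).mul h_g1x
    exact h.deriv
  have hterm2 : pdw (fun q => fderiv ℝ f (Sm q) (0, 1)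
        - fderiv ℝ σ q (1, 0) * fderiv ℝ f (Sm q) (1, 0)) p
      = fderiv ℝ (fderiv ℝ f) (Sm p) ((0 : ℝ), 1 + fderiv ℝ σ p (0, 1)) (0, 1)
        - (fderiv ℝ (fderiv ℝ σ) p (0, 1) (1, 0) * fderiv ℝ f (Sm p) (1, 0)
          + fderiv ℝ σ p (1, 0)
            * fderiv ℝ (fderiv ℝ f) (Sm p) ((0 : ℝ), 1 + fderiv ℝ σ p (0, 1)) (1, 0)) := by
    have h := h_g2w.sub (h_s1w.mul h_g1w)
    exact h.deriv
  rw [hterm1, hterm2]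
  -- decompose the second-derivative applications
  have hd1 : fderiv ℝ (fderiv ℝ f) (Sm p) ((1 : ℝ), fderiv ℝ σ p (1, 0))
      = fderiv ℝ (fderiv ℝ f) (Sm p) (1, 0)
        + fderiv ℝ σ p (1, 0) • fderiv ℝ (fderiv ℝ f) (Sm p) (0, 1) := by
    rw [clm_pt]; simp
  have hd2 : fderiv ℝ (fderiv ℝ f) (Sm p) ((0 : ℝ), 1 + fderiv ℝ σ p (0, 1))
      = (1 + fderiv ℝ σ p (0, 1)) • fderiv ℝ (fderiv ℝ f) (Sm p) (0, 1) := by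
    rw [clm_pt]; simp
  rw [hd1, hd2]
  -- symmetry of the second derivative of σ
  have hsym : fderiv ℝ (fderiv ℝ σ) p (1, 0) (0, 1)
      = fderiv ℝ (fderiv ℝ σ) p (0, 1) (1, 0) :=
    second_derivative_symmetric (fun y => (hσd y).hasFDerivAt)
      ((hσ1.differentiable one_ne_zero p).hasFDerivAt) (1, 0) (0, 1)
  simp only [ContinuousLinearMap.add_apply, ContinuousLinearMap.smul_apply,
    ContinuousLinearMap.comp_apply, ContinuousLinearMap.apply_apply, smul_eq_mul]
  rw [hsym]
  ring
end

section
/- There exists a constant C > 0, depending only on χ and h, such that for every λ > 0, every s ∈ ℝ, and every sequence (f_j)_{j∈ℤ} of complex numbers, one has Σ_{j∈ℤ} (1+j²)^s·|f_j|²·∫_{−h}^{0} χ(√λ·w·|j|)² dw ≤ C·Σ_{j∈ℤ} (1+j²)^s·(1+√λ·|j|)^{−1}·|f_j|² (an inequality in [0,∞]). This is the smoothing property ‖χ(λ^{1/2} w |D|) f‖²_{L²_w H^s_x(𝕋×(−h,0))} ≤ C‖(1+λ^{1/2}|D|)^{−1/2} f‖²_{H^s(𝕋)} expressed through Fourier coefficients.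 -/
/-- Key pointwise bound: `(1+a) ∫_{-h}^0 χ(a w)² dw ≤ h M² + ∫_ℝ χ²` for `a ≥ 0`. -/
lemma smoothing_key (h : ℝ) (hh : 0 < h) (χ : ℝ → ℝ)
    (hχ : Continuous χ) (hχsupp : HasCompactSupport χ)
    (M : ℝ) (hM : ∀ x, |χ x| ≤ M) (a : ℝ) (ha : 0 ≤ a) :
    (∫ w in (-h)..(0 : ℝ), (χ (a * w)) ^ 2) ≤
      (h * M ^ 2 + (∫ u : ℝ, (χ u) ^ 2) + 1) * (1 + a)⁻¹ := by
  have hχ2 : Continuous fun u => (χ u) ^ 2 := hχ.pow 2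
  have hint : MeasureTheory.Integrable fun u => (χ u) ^ 2 :=
    (hχ2).integrable_of_hasCompactSupport
      (hχsupp.comp_left (g := fun x : ℝ => x ^ 2) (by simp))
  have hI0 : 0 ≤ ∫ u : ℝ, (χ u) ^ 2 :=
    MeasureTheory.integral_nonneg fun u => sq_nonneg _
  set J : ℝ := ∫ w in (-h)..(0 : ℝ), (χ (a * w)) ^ 2 with hJ
  have hJ0 : 0 ≤ J := by
    apply intervalIntegral.integral_nonneg (by linarith)
    intro x _; exact sq_nonneg _
  have hcont : Continuous fun w => (χ (a * w)) ^ 2 := hχ2.comp (continuous_const.mul continuous_id)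
  -- J ≤ h M²
  have hb1 : J ≤ h * M ^ 2 := by
    have := intervalIntegral.integral_mono_on (μ := MeasureTheory.volume)
      (f := fun w => (χ (a * w)) ^ 2) (g := fun _ => M ^ 2) (by linarith : (-h : ℝ) ≤ 0)
      (hcont.intervalIntegrable _ _) (intervalIntegrable_const)
      (fun x _ => by
        have := hM (a * x)
        calc (χ (a * x)) ^ 2 = |χ (a * x)| ^ 2 := (sq_abs _).symm
          _ ≤ M ^ 2 := by nlinarith [abs_nonneg (χ (a * x))])
    simpa using this
  -- a J ≤ ∫ χ²
  have hb2 : a * J ≤ ∫ u : ℝ, (χ u) ^ 2 := by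
    rcases eq_or_lt_of_le ha with hrfl | hpos
    · simp [← hrfl, hI0]
    · have hne : a ≠ 0 := ne_of_gt hpos
      have hchg : J = a⁻¹ * ∫ u in (a * (-h))..(a * 0), (χ u) ^ 2 := by
        have := intervalIntegral.integral_comp_mul_left (a := -h) (b := 0)
          (fun u => (χ u) ^ 2) hne
        rw [hJ, this, smul_eq_mul]
      have hle : (∫ u in (a * (-h))..(a * 0), (χ u) ^ 2) ≤ ∫ u : ℝ, (χ u) ^ 2 := by
        rw [intervalIntegral.integral_of_le (by nlinarith : a * (-h) ≤ a * 0)]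
        rw [← MeasureTheory.integral_indicator measurableSet_Ioc]
        apply MeasureTheory.integral_mono_of_nonneg
        · filter_upwards with x
          exact Set.indicator_nonneg (fun y _ => sq_nonneg _) x
        · exact hint
        · filter_upwards with x
          exact Set.indicator_le_self' (fun y _ => sq_nonneg _) x
      rw [hchg]
      rw [← mul_assoc, mul_inv_cancel₀ hne, one_mul]
      exact hle
  have h1a : (0:ℝ) < 1 + a := by linarith
  rw [← div_eq_mul_inv, le_div_iff₀ h1a]
  nlinarith

/-- The smoothing property
`‖χ(λ^{1/2} w |D|) f‖²_{L²_w H^s_x(𝕋×(−h,0))} ≤ C ‖(1+λ^{1/2}|D|)^{−1/2} f‖²_{H^s(𝕋)}`,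
expressed through the Fourier coefficients `f j` of `f`, as an inequality in `[0,∞]`:
the constant `C > 0` depends only on `χ` and `h`. -/
theorem smoothing_property (h : ℝ) (hh : 0 < h) (χ : ℝ → ℝ)
    (hχ : Continuous χ) (hχsupp : HasCompactSupport χ) :
    ∃ C : ℝ, 0 < C ∧
      ∀ lam : ℝ, 0 < lam → ∀ s : ℝ, ∀ f : ℤ → ℂ,
        (∑' j : ℤ, ENNReal.ofReal
            ((1 + (j : ℝ) ^ 2) ^ s * ‖f j‖ ^ 2 *
              ∫ w in (-h)..(0 : ℝ), (χ (Real.sqrt lam * w * |(j : ℝ)|)) ^ 2))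
          ≤ ENNReal.ofReal C *
            ∑' j : ℤ, ENNReal.ofReal
              ((1 + (j : ℝ) ^ 2) ^ s * (1 + Real.sqrt lam * |(j : ℝ)|)⁻¹ *
                ‖f j‖ ^ 2) := by
  obtain ⟨M, hM⟩ := hχsupp.exists_bound_of_continuous hχ
  simp only [Real.norm_eq_abs] at hM
  set C : ℝ := h * M ^ 2 + (∫ u : ℝ, (χ u) ^ 2) + 1 with hC
  have hI0 : 0 ≤ ∫ u : ℝ, (χ u) ^ 2 :=
    MeasureTheory.integral_nonneg fun u => sq_nonneg _
  have hM0 : 0 ≤ M := le_trans (abs_nonneg _) (hM 0)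
  have hCpos : 0 < C := by positivity
  refine ⟨C, hCpos, fun lam hlam s f => ?_⟩
  rw [← ENNReal.tsum_mul_left]
  apply ENNReal.tsum_le_tsum
  intro j
  rw [← ENNReal.ofReal_mul hCpos.le]
  apply ENNReal.ofReal_le_ofReal
  set a : ℝ := Real.sqrt lam * |(j : ℝ)| with ha
  have ha0 : 0 ≤ a := mul_nonneg (Real.sqrt_nonneg _) (abs_nonneg _)
  have key : (∫ w in (-h)..(0 : ℝ), (χ (a * w)) ^ 2) ≤ C * (1 + a)⁻¹ :=
    smoothing_key h hh χ hχ hχsupp M hM a ha0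
  have hiq : (∫ w in (-h)..(0 : ℝ), (χ (Real.sqrt lam * w * |(j : ℝ)|)) ^ 2)
      = ∫ w in (-h)..(0 : ℝ), (χ (a * w)) ^ 2 := by
    congr 1; funext w; rw [ha]; ring_nf
  have hA : 0 ≤ (1 + (j : ℝ) ^ 2) ^ s := Real.rpow_nonneg (by positivity) _
  have hf2 : 0 ≤ ‖f j‖ ^ 2 := sq_nonneg _
  rw [hiq]
  calc (1 + (j : ℝ) ^ 2) ^ s * ‖f j‖ ^ 2 * ∫ w in (-h)..(0:ℝ), (χ (a * w)) ^ 2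
      ≤ (1 + (j : ℝ) ^ 2) ^ s * ‖f j‖ ^ 2 * (C * (1 + a)⁻¹) := by
        apply mul_le_mul_of_nonneg_left key (by positivity)
    _ = C * ((1 + (j : ℝ) ^ 2) ^ s * (1 + a)⁻¹ * ‖f j‖ ^ 2) := by ring
end

section
/- The series η^{(δ)}(x,w) := Σ_{j∈ℤ} χ(δ·w·|j|)·η̂(j)·e^{ijx} converges absolutely for every (x,w), the function w ↦ η^{(δ)}(x,w) is differentiable with ∂η^{(δ)}/∂w(x,w) = Σ_{j∈ℤ} δ·|j|·χ'(δ·w·|j|)·η̂(j)·e^{ijx}, and for all (x,w) one has |∂η^{(δ)}/∂w(x,w)| ≤ δ·‖χ'‖_{L^∞}·C_s·(Σ_{j∈ℤ} (1+j²)^s·|η̂(j)|²)^{1/2}, where C_s := (Σ_{j∈ℤ} j²·(1+j²)^{−s})^{1/2} < ∞. (This is the key estimate showing that the regularizing lift of the surface has small vertical derivative, used to build the regularizing diffeomorphism.) -/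
open Complex

/-- Cauchy–Schwarz for `tsum` over `ℤ`, nonnegative sequences. -/
lemma aux_tsum_cs {a b : ℤ → ℝ} (ha0 : ∀ i, 0 ≤ a i) (hb0 : ∀ i, 0 ≤ b i)
    (ha : Summable fun i => a i ^ 2) (hb : Summable fun i => b i ^ 2) :
    ∑' i, a i * b i ≤ Real.sqrt (∑' i, a i ^ 2) * Real.sqrt (∑' i, b i ^ 2) := by
  have hsum : Summable fun i => a i * b i := by
    apply Summable.of_nonneg_of_le (fun i => mul_nonneg (ha0 i) (hb0 i))
      (fun i => ?_) ((ha.add hb).div_const 2)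
    nlinarith [sq_nonneg (a i - b i)]
  refine Summable.tsum_le_of_sum_le hsum fun t => ?_
  calc ∑ i ∈ t, a i * b i
      ≤ Real.sqrt (∑ i ∈ t, a i ^ 2) * Real.sqrt (∑ i ∈ t, b i ^ 2) :=
        Real.sum_mul_le_sqrt_mul_sqrt t a b
    _ ≤ _ :=
        mul_le_mul (Real.sqrt_le_sqrt (Summable.sum_le_tsum t (fun i _ => sq_nonneg _) ha))
          (Real.sqrt_le_sqrt (Summable.sum_le_tsum t (fun i _ => sq_nonneg _) hb))
          (Real.sqrt_nonneg _) (Real.sqrt_nonneg _)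

/-- Summability of products from summability of squares. -/
lemma aux_summable_mul {a b : ℤ → ℝ} (ha0 : ∀ i, 0 ≤ a i) (hb0 : ∀ i, 0 ≤ b i)
    (ha : Summable fun i => a i ^ 2) (hb : Summable fun i => b i ^ 2) :
    Summable fun i => a i * b i := by
  apply Summable.of_nonneg_of_le (fun i => mul_nonneg (ha0 i) (hb0 i))
    (fun i => ?_) ((ha.add hb).div_const 2)
  nlinarith [sq_nonneg (a i - b i)]

/-- The regularizing lift `η^{(δ)}(x,w) = Σ_j χ(δ·w·|j|) η̂(j) e^{ijx}` of a surface
`η ∈ H^s(𝕋)` (`s > 3/2`): the series converges absolutely, is differentiable in `w`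
with `∂_w η^{(δ)} = Σ_j δ|j| χ'(δ·w·|j|) η̂(j) e^{ijx}`, and
`|∂_w η^{(δ)}| ≤ δ ‖χ'‖_∞ C_s ‖η‖_{H^s}` with `C_s = (Σ_j j²(1+j²)^{−s})^{1/2} < ∞`. -/
theorem regularizing_lift_small_vertical_derivative (s δ : ℝ) (hs : 3 / 2 < s) (hδ : 0 < δ)
    (χ : ℝ → ℝ) (hχ : ContDiff ℝ 1 χ) (M : ℝ) (hM : ∀ t : ℝ, |deriv χ t| ≤ M)
    (ηc : ℤ → ℂ)
    (hη : Summable fun j : ℤ => (1 + (j : ℝ) ^ 2) ^ s * ‖ηc j‖ ^ 2) :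
    (Summable fun j : ℤ => (j : ℝ) ^ 2 * (1 + (j : ℝ) ^ 2) ^ (-s)) ∧
    (∀ x w : ℝ, Summable fun j : ℤ =>
        ‖((Complex.ofReal (χ (δ * w * |(j : ℝ)|))) * ηc j *
          Complex.exp (Complex.I * (j : ℂ) * (x : ℂ)))‖) ∧
    (∀ x w : ℝ, HasDerivAt
        (fun t : ℝ => ∑' j : ℤ, (Complex.ofReal (χ (δ * t * |(j : ℝ)|))) * ηc j *
          Complex.exp (Complex.I * (j : ℂ) * (x : ℂ)))
        (∑' j : ℤ, (Complex.ofReal (δ * |(j : ℝ)| * deriv χ (δ * w * |(j : ℝ)|))) * ηc j *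
          Complex.exp (Complex.I * (j : ℂ) * (x : ℂ))) w) ∧
    (∀ x w : ℝ,
        ‖(∑' j : ℤ,
            (Complex.ofReal (δ * |(j : ℝ)| * deriv χ (δ * w * |(j : ℝ)|))) * ηc j *
              Complex.exp (Complex.I * (j : ℂ) * (x : ℂ)))‖
          ≤ δ * M * Real.sqrt (∑' j : ℤ, (j : ℝ) ^ 2 * (1 + (j : ℝ) ^ 2) ^ (-s)) *
              Real.sqrt (∑' j : ℤ, (1 + (j : ℝ) ^ 2) ^ s * ‖ηc j‖ ^ 2)) := by
  have hM0 : (0:ℝ) ≤ M := (abs_nonneg _).trans (hM 0)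
  have hpos : ∀ j : ℤ, (0:ℝ) < 1 + (j:ℝ)^2 := fun j => by positivity
  -- Part 1 : summability of `j² (1+j²)^{-s}`
  have h1 : Summable fun j : ℤ => (j : ℝ) ^ 2 * (1 + (j : ℝ) ^ 2) ^ (-s) := by
    have hb : 1 < 2 * s - 2 := by linarith
    apply Summable.of_nonneg_of_le (fun j => by positivity) (fun j => ?_)
      (Real.summable_abs_int_rpow hb)
    rcases eq_or_ne j 0 with h | h
    · subst h
      simp [Real.zero_rpow (show (2:ℝ)-2*s ≠ 0 by intro hc; linarith)]
    · have hj : (1:ℝ) ≤ |(j:ℝ)| := by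
        rw [← Int.cast_abs]; exact_mod_cast Int.one_le_abs h
      have hjpos : (0:ℝ) < |(j:ℝ)| := by linarith
      have hj2 : (0:ℝ) < (j:ℝ)^2 := by positivity
      calc (j:ℝ)^2 * (1+(j:ℝ)^2)^(-s)
          ≤ (j:ℝ)^2 * ((j:ℝ)^2)^(-s) := by
            apply mul_le_mul_of_nonneg_left
              (Real.rpow_le_rpow_of_nonpos hj2 (by linarith) (by linarith)) (sq_nonneg _)
        _ = |(j:ℝ)|^(-(2*s-2)) := by
            rw [← _root_.sq_abs (j:ℝ), ← Real.rpow_natCast |(j:ℝ)| 2,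
              ← Real.rpow_mul hjpos.le, ← Real.rpow_add hjpos]
            congr 1
            push_cast
            ring
  -- the weight sequences for Cauchy–Schwarz
  have ha2 : ∀ j : ℤ, (|(j:ℝ)| * (1+(j:ℝ)^2)^(-(s/2)))^2 = (j:ℝ)^2 * (1+(j:ℝ)^2)^(-s) := by
    intro j
    rw [mul_pow, _root_.sq_abs, ← Real.rpow_natCast ((1+(j:ℝ)^2)^(-(s/2))) 2,
      ← Real.rpow_mul (hpos j).le]
    congr 1
    push_cast
    ring
  have hb2 : ∀ j : ℤ, ((1+(j:ℝ)^2)^(s/2) * ‖(ηc j)‖)^2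
      = (1+(j:ℝ)^2)^s * ‖(ηc j)‖^2 := by
    intro j
    rw [mul_pow, ← Real.rpow_natCast ((1+(j:ℝ)^2)^(s/2)) 2, ← Real.rpow_mul (hpos j).le]
    congr 2
    push_cast
    ring
  have hab : ∀ j : ℤ, (|(j:ℝ)| * (1+(j:ℝ)^2)^(-(s/2))) * ((1+(j:ℝ)^2)^(s/2) * ‖(ηc j)‖)
      = |(j:ℝ)| * ‖(ηc j)‖ := by
    intro j
    have h2 : (1+(j:ℝ)^2)^(-(s/2)) * (1+(j:ℝ)^2)^(s/2) = 1 := by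
      rw [← Real.rpow_add (hpos j)]; norm_num
    calc (|(j:ℝ)| * (1+(j:ℝ)^2)^(-(s/2))) * ((1+(j:ℝ)^2)^(s/2) * ‖(ηc j)‖)
        = (|(j:ℝ)| * ‖(ηc j)‖) * ((1+(j:ℝ)^2)^(-(s/2)) * (1+(j:ℝ)^2)^(s/2)) := by ring
      _ = _ := by rw [h2, mul_one]
  have hA : Summable fun j : ℤ => (|(j:ℝ)| * (1+(j:ℝ)^2)^(-(s/2)))^2 :=
    (summable_congr ha2).mpr h1
  have hB : Summable fun j : ℤ => ((1+(j:ℝ)^2)^(s/2) * ‖(ηc j)‖)^2 :=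
    (summable_congr hb2).mpr hη
  have ha0 : ∀ j : ℤ, (0:ℝ) ≤ |(j:ℝ)| * (1+(j:ℝ)^2)^(-(s/2)) := fun j => by positivity
  have hb0 : ∀ j : ℤ, (0:ℝ) ≤ (1+(j:ℝ)^2)^(s/2) * ‖(ηc j)‖ := fun j => by positivity
  -- key summability : `Σ |j| |η̂ j| < ∞`
  have hkey : Summable fun j : ℤ => |(j:ℝ)| * ‖(ηc j)‖ :=
    (summable_congr hab).mp (aux_summable_mul ha0 hb0 hA hB)
  -- key Cauchy–Schwarz estimate
  have hkey_le : ∑' j : ℤ, |(j:ℝ)| * ‖(ηc j)‖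
      ≤ Real.sqrt (∑' j : ℤ, (j : ℝ) ^ 2 * (1 + (j : ℝ) ^ 2) ^ (-s)) *
        Real.sqrt (∑' j : ℤ, (1 + (j : ℝ) ^ 2) ^ s * ‖(ηc j)‖ ^ 2) := by
    have hCS := aux_tsum_cs ha0 hb0 hA hB
    rwa [tsum_congr hab, tsum_congr ha2, tsum_congr hb2] at hCS
  -- summability of `Σ |η̂ j|`
  have habs_eta : Summable fun j : ℤ => ‖(ηc j)‖ := by
    have hsing : Summable (fun j : ℤ => if j = 0 then ‖(ηc 0)‖ else 0) := by
      apply summable_of_ne_finset_zero (s := {0})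
      intro j hj
      simp only [Finset.mem_singleton] at hj
      simp [hj]
    apply Summable.of_nonneg_of_le (fun j => norm_nonneg _) (fun j => ?_) (hkey.add hsing)
    rcases eq_or_ne j 0 with h | h
    · subst h; simp
    · have hj : (1:ℝ) ≤ |(j:ℝ)| := by
        rw [← Int.cast_abs]; exact_mod_cast Int.one_le_abs h
      have : ‖(ηc j)‖ ≤ |(j:ℝ)| * ‖(ηc j)‖ :=
        le_mul_of_one_le_left (norm_nonneg _) hj
      simp only [h, if_neg, if_false]
      simpa using this.trans (by simp)
  -- abs of a term
  have habs_term : ∀ (x w : ℝ) (j : ℤ),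
      ‖((Complex.ofReal (χ (δ * w * |(j : ℝ)|))) * ηc j *
        Complex.exp (Complex.I * (j : ℂ) * (x : ℂ)))‖
      = |χ (δ * w * |(j:ℝ)|)| * ‖(ηc j)‖ := by
    intro x w j
    rw [norm_mul, norm_mul, Complex.norm_real, Real.norm_eq_abs, Complex.norm_exp]
    simp [Complex.mul_re]
  -- MVT bound for χ
  have hχb : ∀ u : ℝ, |χ u| ≤ |χ 0| + M * |u| := by
    intro u
    have h := Convex.norm_image_sub_le_of_norm_deriv_le (s := Set.univ) (f := χ)
      (fun x _ => (hχ.differentiable one_ne_zero).differentiableAt)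
      (fun x _ => by simpa [Real.norm_eq_abs] using hM x) convex_univ
      (Set.mem_univ 0) (Set.mem_univ u)
    simp only [Real.norm_eq_abs, sub_zero] at h
    calc |χ u| = |χ 0 + (χ u - χ 0)| := by ring_nf
      _ ≤ |χ 0| + |χ u - χ 0| := abs_add_le _ _
      _ ≤ |χ 0| + M * |u| := by linarith
  -- Part 2 : absolute convergence
  have h2 : ∀ x w : ℝ, Summable fun j : ℤ =>
      ‖((Complex.ofReal (χ (δ * w * |(j : ℝ)|))) * ηc j *
        Complex.exp (Complex.I * (j : ℂ) * (x : ℂ)))‖ := by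
    intro x w
    apply Summable.of_nonneg_of_le (fun j => norm_nonneg _) (fun j => ?_)
      ((habs_eta.mul_left |χ 0|).add (hkey.mul_left (M * (δ * |w|))))
    rw [habs_term x w j]
    have habsarg : _root_.abs (δ * w * |(j:ℝ)|) = δ * |w| * |(j:ℝ)| := by
      rw [abs_mul, abs_mul, abs_of_pos hδ, _root_.abs_abs]
    calc |χ (δ * w * |(j:ℝ)|)| * ‖(ηc j)‖
        ≤ (|χ 0| + M * (δ * |w| * |(j:ℝ)|)) * ‖(ηc j)‖ := by
          apply mul_le_mul_of_nonneg_right _ (norm_nonneg _)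
          have := hχb (δ * w * |(j:ℝ)|)
          rwa [habsarg] at this
      _ = |χ 0| * ‖(ηc j)‖
            + M * (δ * |w|) * (|(j:ℝ)| * ‖(ηc j)‖) := by ring
  -- derivative of each term
  have hterm_deriv : ∀ (x : ℝ) (j : ℤ) (t : ℝ),
      HasDerivAt (fun t : ℝ => (Complex.ofReal (χ (δ * t * |(j : ℝ)|))) * ηc j *
          Complex.exp (Complex.I * (j : ℂ) * (x : ℂ)))
        ((Complex.ofReal (δ * |(j : ℝ)| * deriv χ (δ * t * |(j : ℝ)|))) * ηc j *
          Complex.exp (Complex.I * (j : ℂ) * (x : ℂ))) t := by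
    intro x j t
    have hd1 : HasDerivAt (fun t : ℝ => δ * t * |(j:ℝ)|) (δ * |(j:ℝ)|) t := by
      simpa using ((hasDerivAt_id t).const_mul δ).mul_const |(j:ℝ)|
    have hd2 : HasDerivAt (fun t : ℝ => χ (δ * t * |(j:ℝ)|))
        (deriv χ (δ * t * |(j:ℝ)|) * (δ * |(j:ℝ)|)) t :=
      (((hχ.differentiable one_ne_zero) _).hasDerivAt).comp t hd1
    have hd3 := (hd2.ofReal_comp.mul_const (ηc j)).mul_const
      (Complex.exp (Complex.I * (j : ℂ) * (x : ℂ)))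
    convert hd3 using 2
    · rfl
    push_cast
    ring
  -- norm bound on derivative terms
  have hterm_bound : ∀ (x : ℝ) (j : ℤ) (t : ℝ),
      ‖(Complex.ofReal (δ * |(j : ℝ)| * deriv χ (δ * t * |(j : ℝ)|))) * ηc j *
          Complex.exp (Complex.I * (j : ℂ) * (x : ℂ))‖
        ≤ δ * M * (|(j:ℝ)| * ‖(ηc j)‖) := by
    intro x j t
    rw [norm_mul, norm_mul, Complex.norm_real, Real.norm_eq_abs, Complex.norm_exp]
    have hre : (Complex.I * (j : ℂ) * (x : ℂ)).re = 0 := by simp [Complex.mul_re]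
    rw [hre, Real.exp_zero, mul_one]
    calc _root_.abs (δ * |(j:ℝ)| * deriv χ (δ * t * |(j:ℝ)|)) * ‖(ηc j)‖
        ≤ (δ * |(j:ℝ)| * M) * ‖(ηc j)‖ := by
          apply mul_le_mul_of_nonneg_right _ (norm_nonneg _)
          rw [abs_mul, abs_mul, abs_of_pos hδ, _root_.abs_abs]
          exact mul_le_mul_of_nonneg_left (hM _) (by positivity)
      _ = δ * M * (|(j:ℝ)| * ‖(ηc j)‖) := by ring
  have hu : Summable fun j : ℤ => δ * M * (|(j:ℝ)| * ‖(ηc j)‖) := hkey.mul_left _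
  -- Part 3 : differentiability
  have h3 : ∀ x w : ℝ, HasDerivAt
      (fun t : ℝ => ∑' j : ℤ, (Complex.ofReal (χ (δ * t * |(j : ℝ)|))) * ηc j *
        Complex.exp (Complex.I * (j : ℂ) * (x : ℂ)))
      (∑' j : ℤ, (Complex.ofReal (δ * |(j : ℝ)| * deriv χ (δ * w * |(j : ℝ)|))) * ηc j *
        Complex.exp (Complex.I * (j : ℂ) * (x : ℂ))) w := by
    intro x w
    exact hasDerivAt_tsum
      (g := fun (j : ℤ) (t : ℝ) => (Complex.ofReal (χ (δ * t * |(j : ℝ)|))) * ηc j *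
        Complex.exp (Complex.I * (j : ℂ) * (x : ℂ)))
      (g' := fun (j : ℤ) (t : ℝ) => (Complex.ofReal (δ * |(j : ℝ)| * deriv χ (δ * t * |(j : ℝ)|))) * ηc j *
        Complex.exp (Complex.I * (j : ℂ) * (x : ℂ)))
      (y₀ := w) hu (fun j t => hterm_deriv x j t) (fun j t => hterm_bound x j t)
      (Summable.of_norm (h2 x w)) w
  refine ⟨h1, h2, h3, ?_⟩
  -- Part 4 : the estimate
  intro x w
  have hnorm_sum : Summable fun j : ℤ =>
      ‖(Complex.ofReal (δ * |(j : ℝ)| * deriv χ (δ * w * |(j : ℝ)|))) * ηc j *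
        Complex.exp (Complex.I * (j : ℂ) * (x : ℂ))‖ :=
    Summable.of_nonneg_of_le (fun j => norm_nonneg _) (fun j => hterm_bound x j w) hu
  calc ‖(∑' j : ℤ,
        (Complex.ofReal (δ * |(j : ℝ)| * deriv χ (δ * w * |(j : ℝ)|))) * ηc j *
          Complex.exp (Complex.I * (j : ℂ) * (x : ℂ)))‖
      = ‖∑' j : ℤ, (Complex.ofReal (δ * |(j : ℝ)| * deriv χ (δ * w * |(j : ℝ)|))) * ηc j *
          Complex.exp (Complex.I * (j : ℂ) * (x : ℂ))‖ := rfl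
    _ ≤ ∑' j : ℤ, ‖(Complex.ofReal (δ * |(j : ℝ)| * deriv χ (δ * w * |(j : ℝ)|))) * ηc j *
          Complex.exp (Complex.I * (j : ℂ) * (x : ℂ))‖ := norm_tsum_le_tsum_norm hnorm_sum
    _ ≤ ∑' j : ℤ, δ * M * (|(j:ℝ)| * ‖(ηc j)‖) :=
          Summable.tsum_le_tsum (fun j => hterm_bound x j w) hnorm_sum hu
    _ = δ * M * ∑' j : ℤ, |(j:ℝ)| * ‖(ηc j)‖ := tsum_mul_left
    _ ≤ δ * M * (Real.sqrt (∑' j : ℤ, (j : ℝ) ^ 2 * (1 + (j : ℝ) ^ 2) ^ (-s)) *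
          Real.sqrt (∑' j : ℤ, (1 + (j : ℝ) ^ 2) ^ s * ‖(ηc j)‖ ^ 2)) :=
          mul_le_mul_of_nonneg_left hkey_le (by positivity)
    _ = _ := by ring
end
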